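/- arXiv:1608.03934 — 8 statements merged into one kernel-verified Lean document; each statement's English description precedes it below -/
import Mathlib

section
/- Let d ≥ 1 and let s = (s_1,…,s_d) be a strictly increasing sequence of positive integers. The topological interior of the s-lecture hall polytope P_d^{(s)} contains exactly one lattice point if and only if s_1 = 2 and s_{i+1} ≤ 2 s_i for all 1 ≤ i ≤ d−1. Moreover, in this case the unique interior lattice point is the point p ∈ ℤ^d with p_i = s_i − 1 for all 1 ≤ i ≤ d. -/
/-!
A lattice point `p` lies in the interior of `P_d^(s)` iff `0 < p_1/s_1 < ⋯ < p_d/s_d < 1`, i.e.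
`0 < p_1`, `p_i s_{i+1} < p_{i+1} s_i` and `p_d < s_d`. Such a point has `p_i < s_i` by downward
induction, and `q = s - 1` is one as soon as `s_1 ≥ 2`. If `s_1 = 2` and `s_{i+1} ≤ 2 s_i`, upward
induction from `p_1 = 1` forces `p = q`, since `(s_i - 1) s_{i+1} < p_{i+1} s_i` gives
`p_{i+1} > s_{i+1} - 2`. Conversely, if `s_1 ≥ 3` or `s_{i+1} > 2 s_i`, lowering `q_1`, resp.
`q_{i+1}`, by one gives a second interior lattice point.
-/

open Pointwise BigOperators

/-- The `s`-lecture hall polytope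
`P_d^(s) = {x ∈ ℝ^d : 0 ≤ x_1/s_1 ≤ x_2/s_2 ≤ ⋯ ≤ x_d/s_d ≤ 1}`
(indices shifted down by one: `x i` is the paper's `x_{i+1}`). -/
def lectureHall (d : ℕ) (s : Fin d → ℕ) : Set (Fin d → ℝ) :=
  {x | (∀ h : 0 < d, 0 ≤ x ⟨0, h⟩ / (s ⟨0, h⟩ : ℝ)) ∧
       (∀ i : Fin d, ∀ hi : (i : ℕ) + 1 < d,
          x i / (s i : ℝ) ≤ x ⟨(i : ℕ) + 1, hi⟩ / (s ⟨(i : ℕ) + 1, hi⟩ : ℝ)) ∧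
       (∀ h : 0 < d,
          x ⟨d - 1, Nat.sub_lt h Nat.one_pos⟩ / (s ⟨d - 1, Nat.sub_lt h Nat.one_pos⟩ : ℝ) ≤ 1)}

/-- The set of lattice points of `ℝ^d`. -/
def latticePoints (d : ℕ) : Set (Fin d → ℝ) := {x | ∀ i, ∃ n : ℤ, x i = (n : ℝ)}

/-- The dual polytope `Q^∨ = {y : ⟨x,y⟩ ≤ 1 for all x ∈ Q}`. -/
def dualPolytope {d : ℕ} (Q : Set (Fin d → ℝ)) : Set (Fin d → ℝ) :=
  {y | ∀ x ∈ Q, ∑ i, x i * y i ≤ 1}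

/-- A full-dimensional lattice polytope is reflexive if it is Fano (the only
lattice point of its interior is the origin) and its dual polytope is a lattice
polytope. -/
def IsReflexive {d : ℕ} (Q : Set (Fin d → ℝ)) : Prop :=
  interior Q ∩ latticePoints d = {0} ∧
  dualPolytope Q = convexHull ℝ (dualPolytope Q ∩ latticePoints d)

/-- Unimodular equivalence: `Q = f_U(P) + w` with `U` an integer matrix of
determinant `±1` and `w` an integer vector. -/
def UnimodularlyEquivalent {d : ℕ} (P Q : Set (Fin d → ℝ)) : Prop :=
  ∃ (U : Matrix (Fin d) (Fin d) ℤ) (w : Fin d → ℤ),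
    (U.det = 1 ∨ U.det = -1) ∧
    Q = (fun x => Matrix.vecMul x (U.map (fun a : ℤ => (a : ℝ))) + fun i => (w i : ℝ)) '' P

/-- `P` is Gorenstein of index `c`: `c` is the smallest positive integer such
that `cP` is unimodularly equivalent to a reflexive polytope. -/
def GorensteinOfIndex {d : ℕ} (P : Set (Fin d → ℝ)) (c : ℕ) : Prop :=
  0 < c ∧
  (∃ Q : Set (Fin d → ℝ), UnimodularlyEquivalent ((c : ℝ) • P) Q ∧ IsReflexive Q) ∧
  ∀ c' : ℕ, 0 < c' →
    (∃ Q : Set (Fin d → ℝ), UnimodularlyEquivalent ((c' : ℝ) • P) Q ∧ IsReflexive Q) →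
    c ≤ c'

/-- `P` is translation equivalent to a reflexive polytope. -/
def TranslationReflexive {d : ℕ} (P : Set (Fin d → ℝ)) : Prop :=
  ∃ w : Fin d → ℤ, IsReflexive ((fun x => x + fun i => (w i : ℝ)) '' P)

/-- With the conventions `e_0 = 0`, `s_0 = 1`, every position `0,…,d-1` of the
`s`-inversion sequence `e` is an ascent (`e i` is the paper's `e_{i+1}`). -/
def allAscents (d : ℕ) (s : Fin d → ℕ) (e : Fin d → ℤ) : Prop :=
  (∀ h : 0 < d, (0 : ℝ) / 1 < (e ⟨0, h⟩ : ℝ) / (s ⟨0, h⟩ : ℝ)) ∧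
  ∀ i : Fin d, ∀ hi : (i : ℕ) + 1 < d,
    (e i : ℝ) / (s i : ℝ) < (e ⟨(i : ℕ) + 1, hi⟩ : ℝ) / (s ⟨(i : ℕ) + 1, hi⟩ : ℝ)

/-- The integer decomposition property. -/
def HasIDP (d : ℕ) (P : Set (Fin d → ℝ)) : Prop :=
  ∀ k : ℕ, 0 < k → ∀ z : Fin d → ℤ,
    (fun i => (z i : ℝ)) ∈ (k : ℝ) • P →
    ∃ x : Fin k → Fin d → ℤ,
      (∀ j, (fun i => (x j i : ℝ)) ∈ P) ∧ ∀ i, (∑ j, x j i) = z i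

open Function Topology

lemma forall_fin_succ_lt_iff {n : ℕ} {P : Fin (n + 1) → Fin (n + 1) → Prop} :
    (∀ i : Fin (n + 1), ∀ hi : (i : ℕ) + 1 < n + 1, P i ⟨(i : ℕ) + 1, hi⟩) ↔
      ∀ i : Fin n, P i.castSucc i.succ :=
  ⟨fun h i => h i.castSucc (by simp), fun h i hi => h ⟨i, by omega⟩⟩

lemma exists_update_mem_of_mem_interior {ι : Type*} [DecidableEq ι] {S : Set (ι → ℝ)}
    {x : ι → ℝ} (hx : x ∈ interior S) (k : ι) :
    ∃ δ > 0, update x k (x k + δ) ∈ S ∧ update x k (x k - δ) ∈ S := by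
  have hcont : Continuous fun t : ℝ => update x k (x k + t) :=
    continuous_const.update k (by fun_prop)
  have hnhds : ∀ᶠ t in 𝓝 (0 : ℝ), update x k (x k + t) ∈ S :=
    hcont.continuousAt.preimage_mem_nhds (by simpa using mem_interior_iff_mem_nhds.mp hx)
  obtain ⟨ε, hε, hball⟩ := Metric.eventually_nhds_iff.mp hnhds
  have hhalf : dist (ε / 2) 0 < ε ∧ dist (-(ε / 2)) 0 < ε := by
    simp [abs_of_pos hε, half_lt_self hε]
  refine ⟨ε / 2, half_pos hε, hball hhalf.1, ?_⟩
  simpa [sub_eq_add_neg] using hball hhalf.2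

section LectureHall

variable {n : ℕ} (s : Fin (n + 1) → ℕ)

lemma lectureHall_succ :
    lectureHall (n + 1) s = {x | 0 ≤ x 0 / (s 0 : ℝ) ∧
      (∀ i : Fin n, x i.castSucc / (s i.castSucc : ℝ) ≤ x i.succ / s i.succ) ∧
      x (Fin.last n) / (s (Fin.last n) : ℝ) ≤ 1} := by
  ext x
  simp only [lectureHall, Set.mem_ofPred_eq, forall_prop_of_true n.succ_pos, Fin.zero_eta,
    forall_fin_succ_lt_iff (P := fun i j => x i / (s i : ℝ) ≤ x j / s j)]
  rfl

def openLectureHall : Set (Fin (n + 1) → ℝ) :=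
  {x | 0 < x 0 / (s 0 : ℝ) ∧
    (∀ i : Fin n, x i.castSucc / (s i.castSucc : ℝ) < x i.succ / s i.succ) ∧
    x (Fin.last n) / (s (Fin.last n) : ℝ) < 1}

lemma isOpen_openLectureHall : IsOpen (openLectureHall s) := by
  simp only [openLectureHall, Set.ofPred_and, Set.ofPred_forall]
  exact (isOpen_lt (by fun_prop) (by fun_prop)).inter
    ((isOpen_iInter_of_finite fun i => isOpen_lt (by fun_prop) (by fun_prop)).inter
      (isOpen_lt (by fun_prop) (by fun_prop)))

lemma openLectureHall_subset_lectureHall : openLectureHall s ⊆ lectureHall (n + 1) s := by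
  rw [lectureHall_succ]
  exact fun x ⟨h0, hchain, hlast⟩ => ⟨h0.le, fun i => (hchain i).le, hlast.le⟩

variable {s}

lemma interior_lectureHall (hpos : ∀ i, 0 < s i) :
    interior (lectureHall (n + 1) s) = openLectureHall s := by
  refine subset_antisymm (fun x hx => ?_)
    (interior_maximal (openLectureHall_subset_lectureHall s) (isOpen_openLectureHall s))
  have hs : ∀ i, (0 : ℝ) < s i := fun i => by exact_mod_cast hpos i
  simp only [lectureHall_succ] at hx
  -- Each constraint keeps slack: moving its coordinate by some `δ > 0` towards it stays in `P`.
  refine ⟨?_, fun i => ?_, ?_⟩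
  · obtain ⟨δ, hδ, -, hmem, -, -⟩ := exists_update_mem_of_mem_interior hx 0
    rw [update_self] at hmem
    exact hmem.trans_lt (div_lt_div_of_pos_right (by linarith) (hs 0))
  · obtain ⟨δ, hδ, ⟨-, hmem, -⟩, -⟩ := exists_update_mem_of_mem_interior hx i.castSucc
    have hchain := hmem i
    rw [update_self, update_of_ne Fin.castSucc_lt_succ.ne'] at hchain
    exact (div_lt_div_of_pos_right (by linarith) (hs _)).trans_le hchain
  · obtain ⟨δ, hδ, ⟨-, -, hmem⟩, -⟩ := exists_update_mem_of_mem_interior hx (Fin.last n)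
    rw [update_self] at hmem
    exact (div_lt_div_of_pos_right (by linarith) (hs _)).trans_le hmem

end LectureHall

section LatticeInterior

variable {n : ℕ} {s : Fin (n + 1) → ℕ}

variable (s) in
def latticeInterior : Set (Fin (n + 1) → ℤ) :=
  {p | 0 < p 0 ∧ (∀ i : Fin n, p i.castSucc * s i.succ < p i.succ * s i.castSucc) ∧
    p (Fin.last n) < s (Fin.last n)}

lemma intCast_mem_interior_lectureHall_iff (hpos : ∀ i, 0 < s i) {p : Fin (n + 1) → ℤ} :
    (fun i => (p i : ℝ)) ∈ interior (lectureHall (n + 1) s) ↔ p ∈ latticeInterior s := by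
  have hs : ∀ i, (0 : ℝ) < s i := fun i => by exact_mod_cast hpos i
  simp only [interior_lectureHall hpos, openLectureHall, latticeInterior, Set.mem_ofPred_eq,
    div_pos_iff_of_pos_right (hs _), div_lt_div_iff₀ (hs _) (hs _), div_lt_one (hs _)]
  norm_cast

lemma lt_of_mem_latticeInterior {p : Fin (n + 1) → ℤ} (hp : p ∈ latticeInterior s)
    (i : Fin (n + 1)) : p i < s i := by
  obtain ⟨-, hchain, hlast⟩ := hp
  induction i using Fin.reverseInduction with
  | last => exact hlast
  | cast i ih =>
    refine lt_of_mul_lt_mul_right ?_ (Int.natCast_nonneg (s i.succ))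
    calc p i.castSucc * s i.succ < p i.succ * s i.castSucc := hchain i
      _ ≤ s i.succ * s i.castSucc := by gcongr
      _ = s i.castSucc * s i.succ := mul_comm _ _

lemma two_le_of_mem_latticeInterior {p : Fin (n + 1) → ℤ} (hp : p ∈ latticeInterior s) :
    2 ≤ s 0 := by
  have := lt_of_mem_latticeInterior hp 0
  have := hp.1
  omega

lemma sub_one_mem_latticeInterior (hinc : StrictMono s) (hs0 : 2 ≤ s 0) :
    (fun i => (s i : ℤ) - 1) ∈ latticeInterior s := by
  refine ⟨by simp only; omega, fun i => ?_, by simp⟩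
  have : (s i.castSucc : ℤ) < s i.succ := by exact_mod_cast hinc Fin.castSucc_lt_succ
  linarith

lemma eq_sub_one_of_mem_latticeInterior (hs0 : s 0 = 2)
    (hdouble : ∀ i : Fin n, s i.succ ≤ 2 * s i.castSucc) {p : Fin (n + 1) → ℤ}
    (hp : p ∈ latticeInterior s) : p = fun i => (s i : ℤ) - 1 := by
  funext i
  have hlt := lt_of_mem_latticeInterior hp
  obtain ⟨hp0, hchain, -⟩ := hp
  induction i using Fin.induction with
  | zero =>
    have := hlt 0
    omega
  | succ i ih =>
    have hlower : (s i.succ : ℤ) - 2 < p i.succ := by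
      have : (s i.succ : ℤ) ≤ 2 * s i.castSucc := by exact_mod_cast hdouble i
      refine lt_of_mul_lt_mul_left ?_ (Int.natCast_nonneg (s i.castSucc))
      calc (s i.castSucc : ℤ) * (s i.succ - 2) ≤ (s i.castSucc - 1) * s i.succ := by linarith
        _ < p i.succ * s i.castSucc := ih ▸ hchain i
        _ = s i.castSucc * p i.succ := mul_comm _ _
    have := hlt i.succ
    omega

lemma sub_single_mem_latticeInterior (hinc : StrictMono s) (hs0 : 2 ≤ s 0) (k : Fin (n + 1))
    (hk0 : k = 0 → 3 ≤ s 0) (hk : ∀ i : Fin n, i.succ = k → 2 * s i.castSucc < s i.succ) :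
    (fun i => (s i : ℤ) - 1) - Pi.single k 1 ∈ latticeInterior s := by
  refine ⟨?_, fun i => ?_, ?_⟩
  · simp only [Pi.sub_apply, Pi.single_apply]
    split_ifs with h
    · have := hk0 h.symm
      omega
    · omega
  · have hlt : (s i.castSucc : ℤ) < s i.succ := by exact_mod_cast hinc Fin.castSucc_lt_succ
    simp only [Pi.sub_apply, Pi.single_apply]
    split_ifs with hc hu hu
    · exact absurd (hc.trans hu.symm) Fin.castSucc_lt_succ.ne
    · linarith
    · have : 2 * (s i.castSucc : ℤ) < s i.succ := by exact_mod_cast hk i hu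
      linarith
    · linarith
  · simp only [Pi.sub_apply, Pi.single_apply]
    split_ifs <;> omega

theorem existsUnique_mem_latticeInterior_iff (hinc : StrictMono s) :
    (∃! p, p ∈ latticeInterior s) ↔ s 0 = 2 ∧ ∀ i : Fin n, s i.succ ≤ 2 * s i.castSucc := by
  refine ⟨fun ⟨p, hp, huniq⟩ => ?_, fun ⟨hs0, hdouble⟩ =>
    ⟨_, sub_one_mem_latticeInterior hinc hs0.ge,
      fun _ hp => eq_sub_one_of_mem_latticeInterior hs0 hdouble hp⟩⟩
  have hs0 := two_le_of_mem_latticeInterior hp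
  have hq := sub_one_mem_latticeInterior hinc hs0
  have hnot_mem (k : Fin (n + 1)) :
      (fun i => (s i : ℤ) - 1) - Pi.single k 1 ∉ latticeInterior s := fun hk => by
    simpa using (huniq _ hk).trans (huniq _ hq).symm
  refine ⟨?_, fun i => ?_⟩
  · by_contra h
    exact hnot_mem 0 (sub_single_mem_latticeInterior hinc hs0 0 (fun _ => by omega)
      fun i hi => absurd hi i.succ_ne_zero)
  · by_contra h
    exact hnot_mem i.succ (sub_single_mem_latticeInterior hinc hs0 i.succ
      (fun h => absurd h i.succ_ne_zero) fun j hj => by rw [Fin.succ_injective _ hj]; omega)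

end LatticeInterior

/-- for strictly increasing `s`, the interior of `P_d^(s)` contains
exactly one lattice point iff `s_1 = 2` and `s_{i+1} ≤ 2 s_i` for all `i`, and in
that case the unique interior lattice point is `(s_1 - 1, …, s_d - 1)`. -/
theorem stmt_0 (d : ℕ) (hd : 0 < d) (s : Fin d → ℕ) (hpos : ∀ i, 0 < s i)
    (hinc : StrictMono s) :
    ((∃! p : Fin d → ℤ, (fun i => (p i : ℝ)) ∈ interior (lectureHall d s)) ↔
      (s ⟨0, hd⟩ = 2 ∧
        ∀ i : Fin d, ∀ hi : (i : ℕ) + 1 < d, s ⟨(i : ℕ) + 1, hi⟩ ≤ 2 * s i)) ∧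
    ((s ⟨0, hd⟩ = 2 ∧
        ∀ i : Fin d, ∀ hi : (i : ℕ) + 1 < d, s ⟨(i : ℕ) + 1, hi⟩ ≤ 2 * s i) →
      ∀ p : Fin d → ℤ, (fun i => (p i : ℝ)) ∈ interior (lectureHall d s) →
        p = fun i => (s i : ℤ) - 1) := by
  obtain ⟨n, rfl⟩ := Nat.exists_eq_add_one_of_ne_zero hd.ne'
  simp only [intCast_mem_interior_lectureHall_iff hpos, Fin.zero_eta,
    forall_fin_succ_lt_iff (P := fun i j => s j ≤ 2 * s i)]
  exact ⟨existsUnique_mem_latticeInterior_iff hinc,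
    fun ⟨hs0, hdouble⟩ _ => eq_sub_one_of_mem_latticeInterior hs0 hdouble⟩
end

section
/- Let d ≥ 1 and let s = (s_1,…,s_d) be a strictly increasing sequence of positive integers with s_1 = 2 and s_{i+1} ≤ 2 s_i for all 1 ≤ i ≤ d−1. Then the sequence e = (s_1−1, s_2−1, …, s_d−1) is the unique s-inversion sequence all of whose d positions 0,1,…,d−1 are ascents; that is, e is the unique integer sequence with 0 ≤ e_i < s_i for all i such that (with e_0 = 0, s_0 = 1) e_i/s_i < e_{i+1}/s_{i+1} holds for every 0 ≤ i ≤ d−1. -/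
open Pointwise BigOperators

/-- for strictly increasing `s` with `s_1 = 2` and `s_{i+1} ≤ 2 s_i`,
the sequence `e = (s_1 - 1, …, s_d - 1)` is the unique `s`-inversion sequence all
of whose positions `0, …, d-1` are ascents. -/
theorem stmt_1 (d : ℕ) (hd : 0 < d) (s : Fin d → ℕ) (hpos : ∀ i, 0 < s i)
    (hinc : StrictMono s) (h1 : s ⟨0, hd⟩ = 2)
    (h2 : ∀ i : Fin d, ∀ hi : (i : ℕ) + 1 < d, s ⟨(i : ℕ) + 1, hi⟩ ≤ 2 * s i) :
    ((∀ i, 0 ≤ (s i : ℤ) - 1 ∧ (s i : ℤ) - 1 < (s i : ℤ)) ∧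
      allAscents d s (fun i => (s i : ℤ) - 1)) ∧
    ∀ e : Fin d → ℤ, (∀ i, 0 ≤ e i ∧ e i < (s i : ℤ)) → allAscents d s e →
      e = fun i => (s i : ℤ) - 1 := by
  have hspos : ∀ i : Fin d, (0:ℝ) < (s i : ℝ) := fun i => by exact_mod_cast hpos i
  constructor
  · refine ⟨fun i => ⟨by have := hpos i; omega, by omega⟩, ?_, ?_⟩
    · intro h
      have hs : (0:ℝ) < (s ⟨0,h⟩ : ℝ) := hspos _
      rw [zero_div, lt_div_iff₀ hs]
      push_cast
      have : (2:ℝ) ≤ (s ⟨0,h⟩ : ℝ) := by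
        have : s ⟨0,h⟩ = 2 := h1
        rw [this]; norm_num
      linarith
    · intro i hi
      have ha : (0:ℝ) < (s i : ℝ) := hspos _
      have hb : (0:ℝ) < (s ⟨(i:ℕ)+1, hi⟩ : ℝ) := hspos _
      have hlt : (s i : ℝ) < (s ⟨(i:ℕ)+1, hi⟩ : ℝ) := by
        exact_mod_cast hinc (show i < ⟨(i:ℕ)+1, hi⟩ from Fin.mk_lt_mk.mpr (Nat.lt_succ_self _))
      rw [div_lt_div_iff₀ ha hb]
      push_cast
      nlinarith
  · intro e he ha
    have key : ∀ n : ℕ, ∀ hn : n < d, e ⟨n, hn⟩ = (s ⟨n, hn⟩ : ℤ) - 1 := by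
      intro n
      induction n with
      | zero =>
        intro hn
        have h0 := ha.1 hn
        rw [zero_div, lt_div_iff₀ (hspos _)] at h0
        rw [zero_mul] at h0
        have h0' : (0:ℤ) < e ⟨0, hn⟩ := by exact_mod_cast h0
        have hub := (he ⟨0, hn⟩).2
        have : s ⟨0, hn⟩ = 2 := h1
        omega
      | succ n ih =>
        intro hn
        have hn' : n < d := Nat.lt_of_succ_lt hn
        have hasc := ha.2 ⟨n, hn'⟩ hn
        rw [ih hn', div_lt_div_iff₀ (hspos _) (hspos _)] at hasc
        have hasc' : ((s ⟨n, hn'⟩ : ℤ) - 1) * (s ⟨n+1, hn⟩ : ℤ) < e ⟨n+1, hn⟩ * (s ⟨n, hn'⟩ : ℤ) := by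
          exact_mod_cast hasc
        have hh2 : (s ⟨n+1, hn⟩ : ℤ) ≤ 2 * (s ⟨n, hn'⟩ : ℤ) := by
          exact_mod_cast h2 ⟨n, hn'⟩ hn
        have hub := (he ⟨n+1, hn⟩).2
        have hp : (0:ℤ) < (s ⟨n, hn'⟩ : ℤ) := by exact_mod_cast hpos _
        have hge : (s ⟨n+1, hn⟩ : ℤ) - 1 ≤ e ⟨n+1, hn⟩ := by nlinarith
        omega
    funext i
    have := key i i.isLt
    simpa using this
end

section
/- Let d ≥ 1 and let s = (s_1,…,s_d) be a strictly increasing sequence of positive integers with s_1 = 2 and s_{i+1} ≤ 2 s_i for all 1 ≤ i ≤ d−1 (so that P_d^{(s)} has the unique interior lattice point p with p_i = s_i − 1), and set Q = P_d^{(s)} − p. Then the dual polytope Q^∨ = {y ∈ ℝ^d : ⟨x,y⟩ ≤ 1 for all x ∈ Q} is a lattice polytope, i.e. Q^∨ = conv(Q^∨ ∩ ℤ^d), if and only if for every 1 ≤ i ≤ d−1 the integer k_i = s_{i+1} − s_i divides both s_i and s_{i+1}. -/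
/-
`Q` is the simplex with vertices `w_f = v_f - p`, where `v_f = (0, …, 0, s_{f+1}, …, s_d)`,
and the origin lies in its interior; so `Q^∨` is the simplex whose vertices `a_f` are the normals
of the facets of `Q` scaled to level `1`. Explicit barycentric coordinates
`μ_f (1 - ⟨w_f, y⟩)` show `Q^∨ = conv {a_f}`, and the `a_f` are extreme points of `Q^∨`. Hence `Q^∨`
is a lattice polytope iff every `a_f` is a lattice point. The normals of the two facets
`x_1 = 0` and `x_d = s_d` are `-e_1` (as `s_1 = 2`) and `e_d`, and the normal of the facet
`x_i / s_i = x_{i+1} / s_{i+1}` is `(s_{i+1} e_i - s_i e_{i+1}) / k_i`, which is integral iff `k_i`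
divides `s_i` and `s_{i+1}`.
-/

open Pointwise BigOperators

open Matrix

theorem eq_convexHull_inter_of_eq_convexHull_range {E ι : Type*} [AddCommGroup E] [Module ℝ E]
    {D L : Set E} {a : ι → E} (hD : D = convexHull ℝ (Set.range a)) (haL : ∀ i, a i ∈ L) :
    D = convexHull ℝ (D ∩ L) := by
  have hsub : Set.range a ⊆ D ∩ L :=
    Set.range_subset_iff.2 fun i => ⟨hD ▸ subset_convexHull ℝ _ ⟨i, rfl⟩, haL i⟩
  refine (convexHull_min Set.inter_subset_left ?_).antisymm' ?_
  · exact hD ▸ convex_convexHull ℝ _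
  · exact hD.trans_subset (convexHull_mono hsub)

theorem convex_dualPolytope {d : ℕ} (Q : Set (Fin d → ℝ)) : Convex ℝ (dualPolytope Q) := by
  simp only [dualPolytope, Set.ofPred_forall]
  exact convex_iInter₂ fun x _ => convex_halfSpace_le
    ⟨fun y z => by simp [mul_add, Finset.sum_add_distrib],
      fun c y => by simp [Finset.mul_sum, mul_left_comm]⟩ 1

section DualSimplex

variable {ι : Type*} {d : ℕ} {Q : Set (Fin d → ℝ)} {w a : ι → Fin d → ℝ}
  {μ : ι → ℝ} {y : Fin d → ℝ}

def baryCoord (w : ι → Fin d → ℝ) (μ : ι → ℝ) (i : ι) (y : Fin d → ℝ) : ℝ :=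
  μ i * (1 - w i ⬝ᵥ y)

theorem baryCoord_nonneg {i : ι} (hw : w i ∈ Q) (hμ : 0 ≤ μ i) (hy : y ∈ dualPolytope Q) :
    0 ≤ baryCoord w μ i y :=
  mul_nonneg hμ (sub_nonneg.2 (hy _ hw))

theorem baryCoord_combo {i : ι} {α β : ℝ} (hαβ : α + β = 1) (y z : Fin d → ℝ) :
    baryCoord w μ i (α • y + β • z) = α * baryCoord w μ i y + β * baryCoord w μ i z := by
  simp only [baryCoord, dotProduct_add, dotProduct_smul, smul_eq_mul]
  linear_combination (-μ i) * hαβ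

theorem baryCoord_le_one [Fintype ι] (hw : ∀ i, w i ∈ Q) (hμ : ∀ i, 0 ≤ μ i)
    (hsum : ∀ y, ∑ i, baryCoord w μ i y = 1)
    (hy : y ∈ dualPolytope Q) (i : ι) : baryCoord w μ i y ≤ 1 :=
  hsum y ▸ Finset.single_le_sum (fun j _ => baryCoord_nonneg (hw j) (hμ j) hy) (Finset.mem_univ i)

theorem eq_of_baryCoord_eq_one [Fintype ι] (hw : ∀ i, w i ∈ Q) (hμ : ∀ i, 0 ≤ μ i)
    (hsum : ∀ y, ∑ i, baryCoord w μ i y = 1) (hrep : ∀ y, ∑ i, baryCoord w μ i y • a i = y)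
    (hy : y ∈ dualPolytope Q) {i : ι} (hi : baryCoord w μ i y = 1) :
    y = a i := by
  classical
  have hothers : ∀ j ∈ Finset.univ.erase i, baryCoord w μ j y = 0 := by
    refine (Finset.sum_eq_zero_iff_of_nonneg fun j _ => baryCoord_nonneg (hw j) (hμ j) hy).1 ?_
    have := Finset.add_sum_erase _ (baryCoord w μ · y) (Finset.mem_univ i)
    linarith [hsum y]
  rw [← hrep y, Finset.sum_eq_single_of_mem i (Finset.mem_univ i)
    fun j _ hj => by rw [hothers j (Finset.mem_erase.2 ⟨hj, Finset.mem_univ j⟩), zero_smul], hi,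
    one_smul]

theorem dualPolytope_eq_convexHull [Fintype ι] (hw : ∀ i, w i ∈ Q) (hμ : ∀ i, 0 ≤ μ i)
    (hsum : ∀ y, ∑ i, baryCoord w μ i y = 1) (hrep : ∀ y, ∑ i, baryCoord w μ i y • a i = y)
    (ha : ∀ i, a i ∈ dualPolytope Q) :
    dualPolytope Q = convexHull ℝ (Set.range a) := by
  refine (convexHull_min (Set.range_subset_iff.2 ha) (convex_dualPolytope Q)).antisymm' ?_
  intro y hy
  rw [← hrep y]
  exact (convex_convexHull ℝ _).sum_mem (fun i _ => baryCoord_nonneg (hw i) (hμ i) hy)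
    (hsum y) fun i _ => subset_convexHull ℝ _ ⟨i, rfl⟩

theorem mem_extremePoints_dualPolytope [Fintype ι] (hw : ∀ i, w i ∈ Q) (hμ : ∀ i, 0 ≤ μ i)
    (hsum : ∀ y, ∑ i, baryCoord w μ i y = 1) (hrep : ∀ y, ∑ i, baryCoord w μ i y • a i = y)
    {i : ι} (ha : a i ∈ dualPolytope Q)
    (hai : baryCoord w μ i (a i) = 1) : a i ∈ (dualPolytope Q).extremePoints ℝ := by
  refine mem_extremePoints.2 ⟨ha, fun y hy z hz ⟨α, β, hα, hβ, hαβ, hyz⟩ => ?_⟩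
  have hy1 := baryCoord_le_one hw hμ hsum hy i
  have hz1 := baryCoord_le_one hw hμ hsum hz i
  rw [← hyz, baryCoord_combo hαβ] at hai
  have hyi : baryCoord w μ i y = 1 := by nlinarith
  have hzi : baryCoord w μ i z = 1 := by nlinarith
  exact ⟨eq_of_baryCoord_eq_one hw hμ hsum hrep hy hyi,
    eq_of_baryCoord_eq_one hw hμ hsum hrep hz hzi⟩

end DualSimplex

theorem Fin.sum_ite_val_eq {M : Type*} [AddCommMonoid M] {n : ℕ} (c : ℕ) (g : Fin n → M) :
    ∑ j : Fin n, (if (j : ℕ) = c then g j else 0) = if h : c < n then g ⟨c, h⟩ else 0 := by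
  split_ifs with h
  · rw [Finset.sum_eq_single ⟨c, h⟩ (fun j _ hj => if_neg fun hjc => hj (Fin.ext hjc))
      (fun h' => absurd (Finset.mem_univ _) h'), if_pos rfl]
  · exact Finset.sum_eq_zero fun j _ => if_neg fun (hjc : (j : ℕ) = c) => h (hjc ▸ j.isLt)

theorem exists_intCast_eq_natCast_div_iff {m n : ℕ} (hn : 0 < n) :
    (∃ z : ℤ, (m : ℝ) / n = z) ↔ n ∣ m := by
  have hn' : (n : ℝ) ≠ 0 := by exact_mod_cast hn.ne'
  constructor
  · rintro ⟨z, hz⟩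
    rw [div_eq_iff hn'] at hz
    exact Int.natCast_dvd_natCast.1 ⟨z, by rw [mul_comm]; exact_mod_cast hz⟩
  · rintro ⟨c, rfl⟩
    exact ⟨c, by push_cast; field_simp⟩

namespace LectureHall

variable {d : ℕ} {s : Fin d → ℕ} {n : ℕ}

/-- `S s n` is the paper's `s_n` (so `S s (i + 1) = s i`), extended by `s_0 = 1` and by `1`
beyond `d`. -/
noncomputable def S (s : Fin d → ℕ) : ℕ → ℝ
  | 0 => 1
  | n + 1 => if h : n < d then (s ⟨n, h⟩ : ℝ) else 1

theorem S_zero : S s 0 = 1 := rfl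

theorem S_succ (h : n < d) : S s (n + 1) = s ⟨n, h⟩ := dif_pos h

theorem S_succ_val (i : Fin d) : S s (i + 1) = s i := S_succ i.isLt

theorem S_lt_S_succ (hd : 0 < d) (hinc : StrictMono s) (h0 : 1 < s ⟨0, hd⟩) (h : n < d) :
    S s n < S s (n + 1) := by
  rcases n with _ | n
  · rw [S_zero, S_succ h]
    exact_mod_cast h0
  · rw [S_succ (Nat.lt_of_succ_lt h), S_succ h]
    exact_mod_cast hinc (Fin.mk_lt_mk.2 n.lt_succ_self)

theorem S_pos (hS : ∀ n < d, S s n < S s (n + 1)) (n : ℕ) : 0 < S s n := by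
  induction n with
  | zero => exact zero_lt_one
  | succ n ih =>
    by_cases h : n < d
    · exact ih.trans (hS n h)
    · rw [S, dif_neg h]
      exact zero_lt_one

noncomputable def k (s : Fin d → ℕ) (n : ℕ) : ℝ := S s (n + 1) - S s n

theorem k_pos (hS : ∀ n < d, S s n < S s (n + 1)) (h : n < d) : 0 < k s n :=
  sub_pos.2 (hS n h)

theorem k_succ_eq_natCast (hS : ∀ n < d, S s n < S s (n + 1)) (i : Fin d)
    (hi : (i : ℕ) + 1 < d) :
    k s (i + 1) = ((s ⟨i + 1, hi⟩ - s i : ℕ) : ℝ) := by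
  have hlt : s i < s ⟨i + 1, hi⟩ := by
    have := hS (i + 1) hi
    rwa [S_succ hi, S_succ_val, Nat.cast_lt] at this
  rw [k, S_succ hi, S_succ_val, Nat.cast_sub hlt.le]

def centered (s : Fin d → ℕ) : Set (Fin d → ℝ) :=
  (fun x (i : Fin d) => x i - ((s i : ℝ) - 1)) '' lectureHall d s

/-- The vertices `(0, …, 0, s_{f+1}, …, s_d)` of `P_d^(s)`, for `f = 0, …, d`. -/
noncomputable def vertex (s : Fin d → ℕ) (f : Fin (d + 1)) : Fin d → ℝ :=
  fun j => if (f : ℕ) ≤ j then S s (j + 1) else 0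

noncomputable def centeredVertex (s : Fin d → ℕ) (f : Fin (d + 1)) : Fin d → ℝ :=
  fun j => vertex s f j - ((s j : ℝ) - 1)

theorem vertex_div (hS : ∀ n < d, S s n < S s (n + 1)) (f : Fin (d + 1)) (j : Fin d) :
    vertex s f j / s j = if (f : ℕ) ≤ j then 1 else 0 := by
  rw [vertex, ← S_succ_val]
  split_ifs
  · exact div_self (S_pos hS _).ne'
  · exact zero_div _

theorem vertex_mem_lectureHall (hS : ∀ n < d, S s n < S s (n + 1)) (f : Fin (d + 1)) :
    vertex s f ∈ lectureHall d s := by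
  refine ⟨fun _ => ?_, fun i hi => ?_, fun _ => ?_⟩ <;> simp only [vertex_div hS]
  · split_ifs <;> norm_num
  · split_ifs with h h'
    all_goals first | exact absurd (Nat.le_succ_of_le h) h' | norm_num
  · split_ifs <;> norm_num

theorem centeredVertex_mem_centered (hS : ∀ n < d, S s n < S s (n + 1)) (f : Fin (d + 1)) :
    centeredVertex s f ∈ centered s :=
  ⟨vertex s f, vertex_mem_lectureHall hS f, rfl⟩

/-- The normal of the facet of `centered s` opposite to `centeredVertex s f`, scaled so that
this facet lies in `{x | x ⬝ᵥ normal s f = 1}`. -/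
noncomputable def normal (s : Fin d → ℕ) (f : Fin (d + 1)) : Fin d → ℝ :=
  fun j =>
    (if (f : ℕ) = j then -S s j / k s j else 0) +
    (if (f : ℕ) = j + 1 then (if (j : ℕ) + 1 = d then 1 else S s (j + 2) / k s (j + 1)) else 0)

theorem normal_succ_apply {m : ℕ} (hm : m + 1 < d) (j : Fin d) :
    normal s ⟨m + 1, by omega⟩ j =
      if (j : ℕ) = m then S s (m + 2) / k s (m + 1)
      else if (j : ℕ) = m + 1 then -(S s (m + 1) / k s (m + 1)) else 0 := by
  obtain ⟨j, hj⟩ := j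
  simp only [normal]
  split_ifs <;> first | omega | (subst_vars; ring)

theorem dotProduct_normal_zero (hd : 0 < d) (x : Fin d → ℝ) :
    x ⬝ᵥ normal s ⟨0, d.succ_pos⟩ = -(x ⟨0, hd⟩ / k s 0) := by
  have (j : Fin d) :
      x j * normal s ⟨0, d.succ_pos⟩ j = if (j : ℕ) = 0 then -(x j / k s j) else 0 := by
    obtain ⟨_ | j, hj⟩ := j
    · simp [normal, S_zero, div_eq_mul_inv]
    · simp [normal]
  simp only [dotProduct, this, Fin.sum_ite_val_eq, dif_pos hd]

theorem dotProduct_normal_last (hd : 0 < d) (x : Fin d → ℝ) :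
    x ⬝ᵥ normal s ⟨d, d.lt_succ_self⟩ = x ⟨d - 1, by omega⟩ := by
  have (j : Fin d) :
      x j * normal s ⟨d, d.lt_succ_self⟩ j = if (j : ℕ) = d - 1 then x j else 0 := by
    simp only [normal]
    split_ifs <;> first | omega | simp
  simp only [dotProduct, this, Fin.sum_ite_val_eq, dif_pos (Nat.sub_lt hd one_pos)]

theorem dotProduct_normal_succ {m : ℕ} (hm : m + 1 < d) (x : Fin d → ℝ) :
    x ⬝ᵥ normal s ⟨m + 1, by omega⟩ =
      (S s (m + 2) * x ⟨m, by omega⟩ - S s (m + 1) * x ⟨m + 1, hm⟩) / k s (m + 1) := by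
  have (j : Fin d) : x j * normal s ⟨m + 1, by omega⟩ j =
      (if (j : ℕ) = m then S s (m + 2) * x j / k s (m + 1) else 0) +
        (if (j : ℕ) = m + 1 then -(S s (m + 1) * x j / k s (m + 1)) else 0) := by
    obtain ⟨j, hj⟩ := j
    simp only [normal]
    split_ifs <;> first | omega | (subst_vars; ring)
  simp only [dotProduct, this, Finset.sum_add_distrib, Fin.sum_ite_val_eq, dif_pos hm,
    dif_pos (show m < d by omega)]
  ring

theorem s_pos (hS : ∀ n < d, S s n < S s (n + 1)) (i : Fin d) : (0 : ℝ) < s i :=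
  S_succ_val (s := s) i ▸ S_pos hS _

theorem normal_mem_dualPolytope (hd : 0 < d) (hS : ∀ n < d, S s n < S s (n + 1))
    (f : Fin (d + 1)) : normal s f ∈ dualPolytope (centered s) := by
  rintro _ ⟨v, ⟨hv0, hvm, hv1⟩, rfl⟩
  change (fun i => v i - ((s i : ℝ) - 1)) ⬝ᵥ normal s f ≤ 1
  obtain ⟨_ | m, hf⟩ := f
  · have hv : 0 ≤ v ⟨0, hd⟩ := by
      simpa using (le_div_iff₀ (s_pos hS _)).1 (hv0 hd)
    rw [dotProduct_normal_zero hd, neg_le, le_div_iff₀ (k_pos hS hd), ← S_succ hd]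
    simp only [k, S_zero]
    linarith
  by_cases hmd : m + 1 = d
  · have hv := (div_le_one (s_pos hS _)).1 (hv1 hd)
    rw [show (⟨m + 1, hf⟩ : Fin (d + 1)) = ⟨d, d.lt_succ_self⟩ from Fin.ext hmd,
      dotProduct_normal_last hd]
    linarith
  · have hm : m + 1 < d := by omega
    have hv := hvm ⟨m, by omega⟩ hm
    rw [div_le_div_iff₀ (s_pos hS _) (s_pos hS _)] at hv
    rw [dotProduct_normal_succ hm, div_le_one (k_pos hS hm), k, S_succ hm,
      S_succ (show m < d by omega)]
    linarith

/-- The barycentric coordinates of `y` with respect to the normals are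
`weight s f * (1 - centeredVertex s f ⬝ᵥ y)`. -/
noncomputable def weight (s : Fin d → ℕ) (n : ℕ) : ℝ :=
  if n = d then 1 / S s d else 1 / S s n - 1 / S s (n + 1)

theorem weight_pos (hS : ∀ n < d, S s n < S s (n + 1)) (hn : n ≤ d) : 0 < weight s n := by
  rw [weight]
  split_ifs with h
  · exact one_div_pos.2 (S_pos hS d)
  · exact sub_pos.2 (one_div_lt_one_div_of_lt (S_pos hS n) (hS n (by omega)))

theorem sum_range_weight {j : ℕ} (hj : j ≤ d) :
    ∑ n ∈ Finset.range j, weight s n = 1 - 1 / S s j := by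
  rw [Finset.sum_congr rfl fun n hn => by rw [weight, if_neg (by simp at hn; omega)],
    Finset.sum_range_sub', S_zero, div_one]

theorem sum_weight_of_le {j : ℕ} (hj : j < d) :
    ∑ f : Fin (d + 1), (if (f : ℕ) ≤ j then weight s f else 0) = 1 - 1 / S s (j + 1) := by
  rw [Fin.sum_univ_eq_sum_range (fun n => if n ≤ j then weight s n else 0),
    ← Finset.sum_range_add_sum_Ico _ (show j + 1 ≤ d + 1 by omega),
    Finset.sum_eq_zero (s := Finset.Ico _ _) fun n hn => if_neg (by simp at hn; omega),
    Finset.sum_congr rfl fun n hn => if_pos (by simp at hn; omega), add_zero,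
    sum_range_weight (by omega)]

theorem sum_weight : ∑ f : Fin (d + 1), weight s f = 1 := by
  rw [Fin.sum_univ_eq_sum_range (weight s), Finset.sum_range_succ, sum_range_weight le_rfl,
    weight, if_pos rfl, sub_add_cancel]

theorem sum_weight_smul_centeredVertex (hS : ∀ n < d, S s n < S s (n + 1)) :
    ∑ f : Fin (d + 1), weight s f • centeredVertex s f = 0 := by
  ext j
  have (f : Fin (d + 1)) : weight s f * centeredVertex s f j =
      (if (f : ℕ) ≤ j then weight s f else 0) * S s (j + 1) - weight s f * (S s (j + 1) - 1) := by
    rw [centeredVertex, vertex, ← S_succ_val]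
    split_ifs <;> ring
  have hSj := (S_pos hS (j + 1)).ne'
  simp only [Finset.sum_apply, Pi.smul_apply, smul_eq_mul, this, Finset.sum_sub_distrib,
    ← Finset.sum_mul, sum_weight_of_le j.isLt, sum_weight, Pi.zero_apply]
  field_simp
  ring

theorem sum_baryCoord (hS : ∀ n < d, S s n < S s (n + 1)) (y : Fin d → ℝ) :
    ∑ f, baryCoord (centeredVertex s) (fun f : Fin (d + 1) => weight s f) f y = 1 := by
  have : ∑ f : Fin (d + 1), weight s f * (centeredVertex s f ⬝ᵥ y) = 0 := by
    simp only [← smul_eq_mul, ← smul_dotProduct, ← sum_dotProduct,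
      sum_weight_smul_centeredVertex hS, zero_dotProduct]
  simp only [baryCoord, mul_one_sub, Finset.sum_sub_distrib, sum_weight, this, sub_zero]

theorem centeredVertex_sub_centeredVertex_succ (j : Fin d) :
    centeredVertex s ⟨j, by omega⟩ - centeredVertex s ⟨j + 1, by omega⟩ =
      Pi.single j (S s (j + 1)) := by
  ext i
  simp only [Pi.sub_apply, centeredVertex, vertex, Pi.single_apply]
  rcases lt_trichotomy (i : ℕ) j with h | h | h
  · rw [if_neg (by omega), if_neg (by omega), if_neg (by omega)]
    ring
  · rw [if_pos h.ge, if_neg (by omega), if_pos (Fin.ext h), h]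
    ring
  · rw [if_pos (by omega), if_pos (by omega), if_neg (by omega)]
    ring

theorem sum_baryCoord_smul_normal (hS : ∀ n < d, S s n < S s (n + 1)) (y : Fin d → ℝ) :
    ∑ f, baryCoord (centeredVertex s) (fun f : Fin (d + 1) => weight s f) f y • normal s f =
      y := by
  ext j
  have hSj := (S_pos hS j).ne'
  have hSj1 := (S_pos hS (j + 1)).ne'
  have hleft : weight s j * (-S s j / k s j) = -(1 / S s (j + 1)) := by
    have hk := (k_pos hS j.isLt).ne'
    rw [weight, if_neg j.isLt.ne]
    rw [k] at hk ⊢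
    field_simp
  have hright : weight s (j + 1) * (if (j : ℕ) + 1 = d then 1 else S s (j + 2) / k s (j + 1)) =
      1 / S s (j + 1) := by
    by_cases hjd : (j : ℕ) + 1 = d
    · rw [weight, if_pos hjd, if_pos hjd, hjd, mul_one]
    · have hk := (k_pos hS (show (j : ℕ) + 1 < d by omega)).ne'
      have hSj2 := (S_pos hS (j + 2)).ne'
      rw [weight, if_neg hjd, if_neg hjd]
      rw [k] at hk ⊢
      field_simp
  have hy : y j = (centeredVertex s ⟨j, by omega⟩ ⬝ᵥ y - centeredVertex s ⟨j + 1, by omega⟩ ⬝ᵥ y) /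
      S s (j + 1) := by
    rw [← sub_dotProduct, centeredVertex_sub_centeredVertex_succ, single_dotProduct]
    field_simp
  simp only [Finset.sum_apply, Pi.smul_apply, smul_eq_mul, normal]
  set B := if (j : ℕ) + 1 = d then 1 else S s (j + 2) / k s (j + 1)
  simp only [mul_add, mul_ite, mul_zero,
    Finset.sum_add_distrib, Fin.sum_ite_val_eq, dif_pos (Nat.lt_succ_of_lt j.isLt),
    dif_pos (Nat.succ_lt_succ j.isLt), baryCoord]
  linear_combination (1 - centeredVertex s ⟨j, by omega⟩ ⬝ᵥ y) * hleft +
    (1 - centeredVertex s ⟨j + 1, by omega⟩ ⬝ᵥ y) * hright - hy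

theorem baryCoord_normal_self (hS : ∀ n < d, S s n < S s (n + 1)) {m : ℕ} (hm : m + 1 < d) :
    baryCoord (centeredVertex s) (fun f : Fin (d + 1) => weight s f) ⟨m + 1, by omega⟩
      (normal s ⟨m + 1, by omega⟩) = 1 := by
  have h0 : centeredVertex s ⟨m + 1, by omega⟩ ⟨m, by omega⟩ = 1 - S s (m + 1) := by
    rw [centeredVertex, vertex, if_neg (by simp), ← S_succ (show m < d by omega)]
    ring
  have h1 : centeredVertex s ⟨m + 1, by omega⟩ ⟨m + 1, hm⟩ = 1 := by
    rw [centeredVertex, vertex, if_pos le_rfl, ← S_succ hm]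
    ring
  have hS1 := (S_pos hS (m + 1)).ne'
  have hS2 := (S_pos hS (m + 2)).ne'
  have hk := (k_pos hS hm).ne'
  rw [baryCoord, dotProduct_normal_succ hm, h0, h1, Fin.val_mk, weight, if_neg hm.ne]
  rw [k] at hk ⊢
  field_simp
  ring

theorem normal_succ_mem_latticePoints_iff (hS : ∀ n < d, S s n < S s (n + 1)) (i : Fin d)
    (hi : (i : ℕ) + 1 < d) :
    normal s ⟨i + 1, by omega⟩ ∈ latticePoints d ↔
      (s ⟨i + 1, hi⟩ - s i) ∣ s i ∧ (s ⟨i + 1, hi⟩ - s i) ∣ s ⟨i + 1, hi⟩ := by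
  have hK : 0 < s ⟨i + 1, hi⟩ - s i := by
    have := k_pos hS hi
    rw [k_succ_eq_natCast hS i hi] at this
    exact_mod_cast this
  have hcoord (j : Fin d) := normal_succ_apply (s := s) hi j
  rw [k_succ_eq_natCast hS i hi, S_succ_val, show (i : ℕ) + 2 = i + 1 + 1 from rfl,
    S_succ hi] at hcoord
  rw [← exists_intCast_eq_natCast_div_iff hK, ← exists_intCast_eq_natCast_div_iff hK]
  constructor
  · intro hL
    obtain ⟨z, hz⟩ := hL ⟨i + 1, hi⟩
    obtain ⟨z', hz'⟩ := hL i
    rw [hcoord, if_neg (by simp), if_pos rfl] at hz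
    rw [hcoord, if_pos rfl] at hz'
    exact ⟨⟨-z, by rw [Int.cast_neg, ← hz, neg_neg]⟩, ⟨z', hz'⟩⟩
  · rintro ⟨⟨z, hz⟩, ⟨z', hz'⟩⟩ j
    rw [hcoord]
    split_ifs
    · exact ⟨z', hz'⟩
    · exact ⟨-z, by rw [hz, Int.cast_neg]⟩
    · exact ⟨0, by simp⟩

theorem normal_mem_latticePoints (hS : ∀ n < d, S s n < S s (n + 1)) (hd : 0 < d)
    (h1 : s ⟨0, hd⟩ = 2)
    (hdvd : ∀ i : Fin d, ∀ hi : (i : ℕ) + 1 < d,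
      (s ⟨i + 1, hi⟩ - s i) ∣ s i ∧ (s ⟨i + 1, hi⟩ - s i) ∣ s ⟨i + 1, hi⟩)
    (f : Fin (d + 1)) : normal s f ∈ latticePoints d := by
  obtain ⟨_ | m, hf⟩ := f
  · intro j
    obtain ⟨_ | j, hj⟩ := j
    · refine ⟨-1, ?_⟩
      simp [normal, k, S_zero, S_succ hd, h1]
      norm_num
    · exact ⟨0, by simp [normal]⟩
  by_cases hmd : m + 1 = d
  · intro j
    refine ⟨if (j : ℕ) + 1 = d then 1 else 0, ?_⟩
    simp only [normal]
    split_ifs <;> first | omega | simp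
  · exact (normal_succ_mem_latticePoints_iff hS ⟨m, by omega⟩ (by simp; omega)).2
      (hdvd ⟨m, by omega⟩ _)

end LectureHall

open LectureHall in
theorem stmt_2_general (d : ℕ) (hd : 0 < d) (s : Fin d → ℕ)
    (hinc : StrictMono s) (h1 : s ⟨0, hd⟩ = 2) :
    (dualPolytope ((fun x (i : Fin d) => x i - ((s i : ℝ) - 1)) '' lectureHall d s) =
        convexHull ℝ
          (dualPolytope ((fun x (i : Fin d) => x i - ((s i : ℝ) - 1)) '' lectureHall d s) ∩
            latticePoints d)) ↔
      ∀ i : Fin d, ∀ hi : (i : ℕ) + 1 < d,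
        (s ⟨(i : ℕ) + 1, hi⟩ - s i) ∣ s i ∧
        (s ⟨(i : ℕ) + 1, hi⟩ - s i) ∣ s ⟨(i : ℕ) + 1, hi⟩ := by
  have hS : ∀ n < d, S s n < S s (n + 1) := fun n => S_lt_S_succ hd hinc (by omega)
  change dualPolytope (centered s) = convexHull ℝ (dualPolytope (centered s) ∩ latticePoints d) ↔ _
  have hw := centeredVertex_mem_centered hS
  have hμ (f : Fin (d + 1)) : 0 ≤ weight s f := (weight_pos hS (Nat.lt_succ_iff.1 f.isLt)).le
  have hsum := sum_baryCoord hS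
  have hrep := sum_baryCoord_smul_normal hS
  have ha := normal_mem_dualPolytope hd hS
  constructor
  · intro hL i hi
    have hext := mem_extremePoints_dualPolytope hw hμ hsum hrep (ha _) (baryCoord_normal_self hS hi)
    rw [hL] at hext
    exact (normal_succ_mem_latticePoints_iff hS i hi).1 (extremePoints_convexHull_subset hext).2
  · intro hdvd
    exact eq_convexHull_inter_of_eq_convexHull_range
      (dualPolytope_eq_convexHull hw hμ hsum hrep ha) (normal_mem_latticePoints hS hd h1 hdvd)

/-- for strictly increasing `s` with `s_1 = 2`, `s_{i+1} ≤ 2 s_i`,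
and `Q = P_d^(s) - p` with `p = (s_1 - 1, …, s_d - 1)`, the dual `Q^∨` is a
lattice polytope iff `k_i = s_{i+1} - s_i` divides `s_i` and `s_{i+1}` for all
`i`. -/
theorem stmt_2 (d : ℕ) (hd : 0 < d) (s : Fin d → ℕ) (hpos : ∀ i, 0 < s i)
    (hinc : StrictMono s) (h1 : s ⟨0, hd⟩ = 2)
    (h2 : ∀ i : Fin d, ∀ hi : (i : ℕ) + 1 < d, s ⟨(i : ℕ) + 1, hi⟩ ≤ 2 * s i) :
    (dualPolytope ((fun x (i : Fin d) => x i - ((s i : ℝ) - 1)) '' lectureHall d s) =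
        convexHull ℝ
          (dualPolytope ((fun x (i : Fin d) => x i - ((s i : ℝ) - 1)) '' lectureHall d s) ∩
            latticePoints d)) ↔
      ∀ i : Fin d, ∀ hi : (i : ℕ) + 1 < d,
        (s ⟨(i : ℕ) + 1, hi⟩ - s i) ∣ s i ∧
        (s ⟨(i : ℕ) + 1, hi⟩ - s i) ∣ s ⟨(i : ℕ) + 1, hi⟩ :=
  stmt_2_general d hd s hinc h1
end

section
/- Let d ≥ 1 and let s = (s_1,…,s_d) be a strictly increasing sequence of positive integers. Then P_d^{(s)} is Gorenstein of index 2 if and only if the sequence t = (2 s_1, 2 s_2, …, 2 s_d) has the property that P_d^{(t)} is translation equivalent to a reflexive polytope (equivalently, s = (t_1/2,…,t_d/2) for a strictly increasing positive integer sequence t with P_d^{(t)} reflexive up to translation). -/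
open Pointwise BigOperators

section Aux

open Matrix

variable {d : ℕ}

/-! ### Small helper lemmas -/

lemma cast_mem_lattice (u : Fin d → ℤ) : (fun i => (u i : ℝ)) ∈ latticePoints d :=
  fun i => ⟨u i, rfl⟩

lemma rmap_mul (V W : Matrix (Fin d) (Fin d) ℤ) :
    (V * W).map (fun a : ℤ => (a : ℝ)) =
      V.map (fun a : ℤ => (a : ℝ)) * W.map (fun a : ℤ => (a : ℝ)) :=
  Matrix.map_mul (f := Int.castRingHom ℝ)

lemma rmap_one :
    (1 : Matrix (Fin d) (Fin d) ℤ).map (fun a : ℤ => (a : ℝ)) = 1 :=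
  Matrix.map_one _ Int.cast_zero Int.cast_one

lemma lattice_vecMul (V : Matrix (Fin d) (Fin d) ℤ) {x : Fin d → ℝ}
    (hx : x ∈ latticePoints d) :
    Matrix.vecMul x (V.map (fun a : ℤ => (a : ℝ))) ∈ latticePoints d := by
  intro i
  choose n hn using hx
  refine ⟨∑ j, n j * V j i, ?_⟩
  simp only [Matrix.vecMul, dotProduct, Matrix.map_apply, hn]
  push_cast
  rfl

lemma lattice_mulVec (V : Matrix (Fin d) (Fin d) ℤ) {x : Fin d → ℝ}
    (hx : x ∈ latticePoints d) :
    Matrix.mulVec (V.map (fun a : ℤ => (a : ℝ))) x ∈ latticePoints d := by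
  intro i
  choose n hn using hx
  refine ⟨∑ j, V i j * n j, ?_⟩
  simp only [Matrix.mulVec, dotProduct, Matrix.map_apply, hn]
  push_cast
  rfl

/-- The linear equivalence given by an integer matrix with integer inverse. -/
noncomputable def vecMulEquiv (V W : Matrix (Fin d) (Fin d) ℤ)
    (hVW : V * W = 1) (hWV : W * V = 1) : (Fin d → ℝ) ≃ₗ[ℝ] (Fin d → ℝ) :=
  LinearEquiv.ofLinear (V.map (fun a : ℤ => (a : ℝ))).vecMulLinear
    (W.map (fun a : ℤ => (a : ℝ))).vecMulLinear
    (by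
      apply LinearMap.ext; intro x
      show Matrix.vecMul (Matrix.vecMul x (W.map (fun a : ℤ => (a : ℝ))))
        (V.map (fun a : ℤ => (a : ℝ))) = x
      rw [Matrix.vecMul_vecMul, ← rmap_mul, hWV, rmap_one, Matrix.vecMul_one])
    (by
      apply LinearMap.ext; intro x
      show Matrix.vecMul (Matrix.vecMul x (V.map (fun a : ℤ => (a : ℝ))))
        (W.map (fun a : ℤ => (a : ℝ))) = x
      rw [Matrix.vecMul_vecMul, ← rmap_mul, hVW, rmap_one, Matrix.vecMul_one])

lemma zero_mem_interior_of_isReflexive {Q : Set (Fin d → ℝ)} (hQ : IsReflexive Q) :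
    (0 : Fin d → ℝ) ∈ interior Q := by
  have h : (0 : Fin d → ℝ) ∈ interior Q ∩ latticePoints d := by
    rw [hQ.1]; rfl
  exact h.1

/-- Reflexivity is invariant under unimodular linear maps. -/
lemma isReflexive_image_vecMul (V W : Matrix (Fin d) (Fin d) ℤ)
    (hVW : V * W = 1) (hWV : W * V = 1) {Q : Set (Fin d → ℝ)} (hQ : IsReflexive Q) :
    IsReflexive ((fun x => Matrix.vecMul x (V.map (fun a : ℤ => (a : ℝ)))) '' Q) := by
  classical
  set Mv : Matrix (Fin d) (Fin d) ℝ := V.map (fun a : ℤ => (a : ℝ)) with hMv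
  set Mw : Matrix (Fin d) (Fin d) ℝ := W.map (fun a : ℤ => (a : ℝ)) with hMw
  have hMvw : Mv * Mw = 1 := by rw [hMv, hMw, ← rmap_mul, hVW, rmap_one]
  have hMwv : Mw * Mv = 1 := by rw [hMv, hMw, ← rmap_mul, hWV, rmap_one]
  let e : (Fin d → ℝ) ≃ₗ[ℝ] (Fin d → ℝ) := vecMulEquiv V W hVW hWV
  have hecoe : ∀ x, e x = Matrix.vecMul x Mv := fun _ => rfl
  have hhomeo : (fun x => Matrix.vecMul x Mv) '' interior Q =
      interior ((fun x => Matrix.vecMul x Mv) '' Q) :=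
    (e.toContinuousLinearEquiv.toHomeomorph).image_interior Q
  constructor
  · ext y
    simp only [Set.mem_inter_iff, Set.mem_singleton_iff]
    constructor
    · rintro ⟨hyi, hyl⟩
      rw [← hhomeo] at hyi
      obtain ⟨x, hx, rfl⟩ := hyi
      have hxl : x ∈ latticePoints d := by
        have h := lattice_vecMul W hyl
        rwa [← hMw, Matrix.vecMul_vecMul, hMvw, Matrix.vecMul_one] at h
      have hx0 : x ∈ interior Q ∩ latticePoints d := ⟨hx, hxl⟩
      rw [hQ.1, Set.mem_singleton_iff] at hx0
      rw [hx0]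
      exact Matrix.zero_vecMul _
    · rintro rfl
      refine ⟨?_, fun i => ⟨0, by simp⟩⟩
      rw [← hhomeo]
      exact ⟨0, zero_mem_interior_of_isReflexive hQ, Matrix.zero_vecMul _⟩
  · have key : ∀ (x y : Fin d → ℝ),
        (∑ i, Matrix.vecMul x Mv i * y i) = ∑ i, x i * Matrix.mulVec Mv y i := by
      intro x y
      have h := Matrix.dotProduct_mulVec x Mv y
      simpa [dotProduct] using h.symm
    have hstep1 : dualPolytope ((fun x => Matrix.vecMul x Mv) '' Q) =
        {y | Matrix.mulVec Mv y ∈ dualPolytope Q} := by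
      ext y
      simp only [dualPolytope, Set.mem_setOf_eq]
      constructor
      · intro h x hx
        have h2 := h (Matrix.vecMul x Mv) ⟨x, hx, rfl⟩
        rwa [key] at h2
      · rintro h x ⟨z, hz, rfl⟩
        rw [key]
        exact h z hz
    have hstep2 : ∀ A : Set (Fin d → ℝ),
        {y | Matrix.mulVec Mv y ∈ A} = (fun y => Matrix.mulVec Mw y) '' A := by
      intro A
      ext z
      constructor
      · intro hz
        refine ⟨Matrix.mulVec Mv z, hz, ?_⟩
        show Matrix.mulVec Mw (Matrix.mulVec Mv z) = z
        rw [Matrix.mulVec_mulVec, hMwv, Matrix.one_mulVec]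
      · rintro ⟨a, ha, rfl⟩
        show Matrix.mulVec Mv (Matrix.mulVec Mw a) ∈ A
        rwa [Matrix.mulVec_mulVec, hMvw, Matrix.one_mulVec]
    have hlat : ((fun y => Matrix.mulVec Mw y) '' dualPolytope Q) ∩ latticePoints d =
        (fun y => Matrix.mulVec Mw y) '' (dualPolytope Q ∩ latticePoints d) := by
      ext z
      constructor
      · rintro ⟨⟨a, ha, rfl⟩, hzl⟩
        refine ⟨a, ⟨ha, ?_⟩, rfl⟩
        have h := lattice_mulVec V hzl
        rwa [← hMv, Matrix.mulVec_mulVec, hMvw, Matrix.one_mulVec] at h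
      · rintro ⟨a, ⟨ha, hal⟩, rfl⟩
        exact ⟨⟨a, ha, rfl⟩, lattice_mulVec W hal⟩
    have hconv : (fun y => Matrix.mulVec Mw y) ''
          convexHull ℝ (dualPolytope Q ∩ latticePoints d) =
        convexHull ℝ ((fun y => Matrix.mulVec Mw y) ''
          (dualPolytope Q ∩ latticePoints d)) :=
      Mw.mulVecLin.image_convexHull _
    calc dualPolytope ((fun x => Matrix.vecMul x Mv) '' Q)
        = (fun y => Matrix.mulVec Mw y) '' dualPolytope Q := by rw [hstep1, hstep2]
      _ = (fun y => Matrix.mulVec Mw y) ''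
            convexHull ℝ (dualPolytope Q ∩ latticePoints d) := by rw [← hQ.2]
      _ = convexHull ℝ ((fun y => Matrix.mulVec Mw y) ''
            (dualPolytope Q ∩ latticePoints d)) := hconv
      _ = convexHull ℝ (dualPolytope ((fun x => Matrix.vecMul x Mv) '' Q) ∩
            latticePoints d) := by rw [hstep1, hstep2, hlat]

/-- A polytope unimodularly equivalent to a reflexive polytope is
translation equivalent to a reflexive polytope. -/
lemma unimod_translate {P R : Set (Fin d → ℝ)} (h : UnimodularlyEquivalent P R)
    (hR : IsReflexive R) :
    ∃ u : Fin d → ℤ, IsReflexive ((fun x => x + fun i => (u i : ℝ)) '' P) := by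
  obtain ⟨U, v, hdet, rfl⟩ := h
  have hU : IsUnit U.det := by
    rcases hdet with h1 | h1 <;> rw [h1]
    · exact isUnit_one
    · exact isUnit_one.neg
  have hinv : Invertible U := U.invertibleOfIsUnitDet hU
  refine ⟨Matrix.vecMul v (⅟U), ?_⟩
  have h5 := isReflexive_image_vecMul (⅟U) U (invOf_mul_self U) (mul_invOf_self U) hR
  rw [Set.image_image] at h5
  have heq : (fun x : Fin d → ℝ =>
      Matrix.vecMul (Matrix.vecMul x (U.map (fun a : ℤ => (a : ℝ))) + fun i => (v i : ℝ))
        ((⅟U).map (fun a : ℤ => (a : ℝ)))) =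
      fun x => x + fun i => ((Matrix.vecMul v (⅟U)) i : ℝ) := by
    funext x
    rw [Matrix.add_vecMul, Matrix.vecMul_vecMul, ← rmap_mul, mul_invOf_self, rmap_one,
      Matrix.vecMul_one]
    congr 1
    funext i
    exact ((Int.castRingHom ℝ).map_vecMul (⅟U) v i).symm
  rwa [heq] at h5

/-! ### Lecture hall polytope facts -/

lemma convex_lectureHall (d : ℕ) (s : Fin d → ℕ) : Convex ℝ (lectureHall d s) := by
  intro x hx y hy a b ha hb hab
  obtain ⟨hx1, hx2, hx3⟩ := hx
  obtain ⟨hy1, hy2, hy3⟩ := hy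
  have key : ∀ i : Fin d, (a • x + b • y) i / (s i : ℝ) =
      a * (x i / (s i : ℝ)) + b * (y i / (s i : ℝ)) := by
    intro i
    rw [Pi.add_apply, Pi.smul_apply, Pi.smul_apply, smul_eq_mul, smul_eq_mul, add_div,
      mul_div_assoc, mul_div_assoc]
  refine ⟨?_, ?_, ?_⟩
  · intro h
    rw [key]
    exact add_nonneg (mul_nonneg ha (hx1 h)) (mul_nonneg hb (hy1 h))
  · intro i hi
    rw [key, key]
    exact add_le_add (mul_le_mul_of_nonneg_left (hx2 i hi) ha)
      (mul_le_mul_of_nonneg_left (hy2 i hi) hb)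
  · intro h
    rw [key]
    calc a * (x _ / (s _ : ℝ)) + b * (y _ / (s _ : ℝ))
        ≤ a * 1 + b * 1 :=
          add_le_add (mul_le_mul_of_nonneg_left (hx3 h) ha)
            (mul_le_mul_of_nonneg_left (hy3 h) hb)
      _ = 1 := by rw [mul_one, mul_one, hab]

lemma zero_mem_lectureHall (d : ℕ) (s : Fin d → ℕ) : (0 : Fin d → ℝ) ∈ lectureHall d s := by
  refine ⟨fun h => ?_, fun i hi => ?_, fun h => ?_⟩ <;> simp

lemma top_mem_lectureHall (d : ℕ) (s : Fin d → ℕ) (hpos : ∀ i, 0 < s i) :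
    (fun i => (s i : ℝ)) ∈ lectureHall d s := by
  have h1 : ∀ i : Fin d, (s i : ℝ) / (s i : ℝ) = 1 := fun i =>
    div_self (by exact_mod_cast (hpos i).ne')
  exact ⟨fun h => by rw [h1]; norm_num, fun i hi => by rw [h1, h1],
    fun h => (h1 _).le⟩

lemma smul_two_lectureHall (d : ℕ) (s : Fin d → ℕ) :
    (2 : ℝ) • lectureHall d s = lectureHall d (fun i => 2 * s i) := by
  ext x
  rw [Set.mem_smul_set_iff_inv_smul_mem₀ (two_ne_zero) _ _]
  have key : ∀ i : Fin d, ((2 : ℝ)⁻¹ • x) i / (s i : ℝ) =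
      x i / ((2 * s i : ℕ) : ℝ) := by
    intro i
    push_cast
    rw [Pi.smul_apply, smul_eq_mul, inv_mul_eq_div, div_div]
  simp only [lectureHall, Set.mem_setOf_eq, key]

lemma interior_translate (c : Fin d → ℝ) (P : Set (Fin d → ℝ)) :
    interior ((fun x => x + c) '' P) = (fun x => x + c) '' interior P :=
  ((Homeomorph.addRight c).image_interior P).symm

/-- Core contradiction: `P_d^(s)` and `P_d^(2s)` cannot both be translation
reflexive. -/
lemma not_both_reflexive (d : ℕ) (hd : 0 < d) (s : Fin d → ℕ) (hpos : ∀ i, 0 < s i)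
    (w u : Fin d → ℤ)
    (hw : IsReflexive ((fun x => x + fun i => (w i : ℝ)) '' lectureHall d (fun i => 2 * s i)))
    (hu : IsReflexive ((fun x => x + fun i => (u i : ℝ)) '' lectureHall d s)) : False := by
  set P : Set (Fin d → ℝ) := lectureHall d s with hP
  set cu : Fin d → ℝ := fun i => (u i : ℝ) with hcu
  set cw : Fin d → ℝ := fun i => (w i : ℝ) with hcwdef
  -- `-cu` is an interior point of `P`
  have h0u : (0 : Fin d → ℝ) ∈ interior ((fun x => x + cu) '' P) :=
    zero_mem_interior_of_isReflexive hu
  rw [interior_translate] at h0u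
  obtain ⟨x0, hx0, hx0e⟩ := h0u
  have hmu : -cu ∈ interior P := by
    have : x0 = -cu := eq_neg_of_add_eq_zero_left hx0e
    rwa [this] at hx0
  -- hence `-2 cu + cw` is an interior lattice point of the translated `P^(2s)`
  have hLH2 : lectureHall d (fun i => 2 * s i) = (2 : ℝ) • P := (smul_two_lectureHall d s).symm
  have hintmem : (2 : ℝ) • (-cu) + cw ∈
      interior ((fun x => x + cw) '' lectureHall d (fun i => 2 * s i)) := by
    rw [interior_translate, hLH2, interior_smul₀ two_ne_zero]
    exact ⟨(2 : ℝ) • (-cu), Set.smul_mem_smul_set hmu, rfl⟩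
  have hlatmem : (2 : ℝ) • (-cu) + cw ∈ latticePoints d := by
    intro i
    refine ⟨w i - 2 * u i, ?_⟩
    simp only [Pi.add_apply, Pi.smul_apply, Pi.neg_apply, smul_eq_mul, hcu, hcwdef]
    push_cast
    ring
  have hzero : (2 : ℝ) • (-cu) + cw = 0 := by
    have h := hw.1
    have hm : (2 : ℝ) • (-cu) + cw ∈
        interior ((fun x => x + cw) '' lectureHall d (fun i => 2 * s i)) ∩ latticePoints d :=
      ⟨hintmem, hlatmem⟩
    rwa [h, Set.mem_singleton_iff] at hm
  have hcw : cw = (2 : ℝ) • cu := by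
    have := hzero
    funext i
    have h2 := congrFun hzero i
    simp only [Pi.add_apply, Pi.smul_apply, Pi.neg_apply, Pi.zero_apply, smul_eq_mul] at h2
    simp only [Pi.smul_apply, smul_eq_mul]
    linarith
  -- so the translated `P^(2s)` is `2 • Q` where `Q` is the translated `P`
  set Q : Set (Fin d → ℝ) := (fun x => x + cu) '' P with hQdef
  have hsetQ : (fun x => x + cw) '' lectureHall d (fun i => 2 * s i) = (2 : ℝ) • Q := by
    rw [hLH2, hcw, hQdef, ← Set.image_smul, ← Set.image_smul, Set.image_image,
      Set.image_image]
    apply Set.image_congr'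
    intro x
    rw [smul_add]
  rw [hsetQ] at hw
  -- every lattice point of `Q` is zero
  have hQconv : Convex ℝ Q := by
    have h := (convex_lectureHall d s).translate cu
    have : (fun x : Fin d → ℝ => cu + x) = fun x => x + cu := by
      funext x; rw [add_comm]
    rwa [this] at h
  have hQ2conv : Convex ℝ ((2 : ℝ) • Q) := hQconv.smul 2
  have h0i : (0 : Fin d → ℝ) ∈ interior ((2 : ℝ) • Q) :=
    zero_mem_interior_of_isReflexive hw
  have key : ∀ p : Fin d → ℝ, p ∈ Q → p ∈ latticePoints d → p = 0 := by
    intro p hp hpl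
    have h2p : (2 : ℝ) • p ∈ (2 : ℝ) • Q := Set.smul_mem_smul_set hp
    have hcombo := hQ2conv.combo_interior_self_mem_interior h0i h2p
      (by norm_num : (0:ℝ) < 1/2) (by norm_num : (0:ℝ) ≤ 1/2) (by norm_num)
    have hpint : p ∈ interior ((2 : ℝ) • Q) := by
      have hsimp : (1/2 : ℝ) • (0 : Fin d → ℝ) + (1/2 : ℝ) • ((2 : ℝ) • p) = p := by
        rw [smul_zero, zero_add, smul_smul]
        norm_num
      rwa [hsimp] at hcombo
    have hm : p ∈ interior ((2 : ℝ) • Q) ∩ latticePoints d := ⟨hpint, hpl⟩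
    rwa [hw.1, Set.mem_singleton_iff] at hm
  -- apply it to the images of `0` and of `(s_1, …, s_d)`
  have hu0 : cu = 0 := by
    refine key cu ⟨0, zero_mem_lectureHall d s, by show (0 : Fin d → ℝ) + cu = cu; rw [zero_add]⟩ ?_
    exact cast_mem_lattice u
  have hs0 : (fun i => (s i : ℝ)) + cu = 0 := by
    refine key _ ⟨fun i => (s i : ℝ), top_mem_lectureHall d s hpos, rfl⟩ ?_
    intro i
    refine ⟨(s i : ℤ) + u i, ?_⟩
    simp only [Pi.add_apply, hcu]
    push_cast
    ring
  rw [hu0, add_zero] at hs0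
  have h := congrFun hs0 ⟨0, hd⟩
  rw [Pi.zero_apply] at h
  exact absurd (Nat.cast_eq_zero.mp h) (hpos _).ne'

end Aux

/-- for strictly increasing `s`, `P_d^(s)` is Gorenstein of index 2
iff `P_d^(2s)` is translation equivalent to a reflexive polytope. -/
theorem stmt_3 (d : ℕ) (hd : 0 < d) (s : Fin d → ℕ) (hpos : ∀ i, 0 < s i)
    (hinc : StrictMono s) :
    GorensteinOfIndex (lectureHall d s) 2 ↔
      TranslationReflexive (lectureHall d (fun i => 2 * s i)) := by
  have hP2 : ((2 : ℕ) : ℝ) • lectureHall d s = lectureHall d (fun i => 2 * s i) := by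
    rw [Nat.cast_ofNat]
    exact smul_two_lectureHall d s
  constructor
  · rintro ⟨-, ⟨R, hequiv, hR⟩, -⟩
    obtain ⟨u, hu⟩ := unimod_translate hequiv hR
    exact ⟨u, by rwa [hP2] at hu⟩
  · rintro ⟨w, hw⟩
    refine ⟨by norm_num,
      ⟨(fun x => x + fun i => (w i : ℝ)) '' lectureHall d (fun i => 2 * s i),
        ⟨1, w, Or.inl Matrix.det_one, ?_⟩, hw⟩, ?_⟩
    · rw [hP2]
      have hfun : (fun x : Fin d → ℝ =>
          Matrix.vecMul x ((1 : Matrix (Fin d) (Fin d) ℤ).map (fun a : ℤ => (a : ℝ))) +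
            fun i => (w i : ℝ)) = fun x => x + fun i => (w i : ℝ) := by
        funext x
        rw [rmap_one, Matrix.vecMul_one]
      rw [hfun]
    · intro c' hc' hc'ex
      by_contra hlt
      push_neg at hlt
      have hc1 : c' = 1 := by omega
      subst hc1
      obtain ⟨R, hequiv, hR⟩ := hc'ex
      rw [Nat.cast_one, one_smul] at hequiv
      obtain ⟨u, hu⟩ := unimod_translate hequiv hR
      exact not_both_reflexive d hd s hpos w u hw hu
end

section
/- Let d ≥ 1, let s = (s_1,…,s_d) be a strictly increasing sequence of positive integers, and let c ≥ 3 be an integer. Then the dilate c·P_d^{(s)} is not unimodularly equivalent to a reflexive polytope; consequently there is no strictly increasing sequence s of positive integers for which P_d^{(s)} is Gorenstein of index ≥ 3. -/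
open Pointwise BigOperators

/-- Casting distinct integer vectors to `ℝ` gives distinct vectors. -/
lemma castVec_injective {d : ℕ} {z w : Fin d → ℤ}
    (h : (fun i => (z i : ℝ)) = fun i => (w i : ℝ)) : z = w :=
  funext fun i => Int.cast_injective (congrFun h i)

/-- If `A` has two distinct interior lattice points, it is not unimodularly
equivalent to a reflexive polytope. -/
lemma two_interior_lattice_not_reflexive {d : ℕ} {A Q : Set (Fin d → ℝ)}
    (hequiv : UnimodularlyEquivalent A Q) (hQ : IsReflexive Q)
    (z w : Fin d → ℤ) (hz : (fun i => (z i : ℝ)) ∈ interior A)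
    (hw : (fun i => (w i : ℝ)) ∈ interior A) (hzw : z ≠ w) : False := by
  obtain ⟨U, v, hdet, hQA⟩ := hequiv
  set M : Matrix (Fin d) (Fin d) ℝ := U.map (fun a : ℤ => (a : ℝ)) with hM
  have hMdet : M.det = ((U.det : ℤ) : ℝ) := by
    have h := RingHom.map_det (Int.castRingHom ℝ) U
    rw [RingHom.mapMatrix_apply] at h
    exact h.symm
  have hMunit : IsUnit M.det := by
    rcases hdet with h | h <;> rw [hMdet, h] <;> norm_num
  have hMM : M * M⁻¹ = 1 := Matrix.mul_nonsing_inv M hMunit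
  have hM'M : M⁻¹ * M = 1 := Matrix.nonsing_inv_mul M hMunit
  have hcont : ∀ N : Matrix (Fin d) (Fin d) ℝ,
      Continuous fun x : Fin d → ℝ => Matrix.vecMul x N := by
    intro N
    have h1 : (fun x : Fin d → ℝ => Matrix.vecMul x N) = ⇑N.vecMulLinear := by
      ext x i; rw [Matrix.vecMulLinear_apply]
    rw [h1]
    exact LinearMap.continuous_of_finiteDimensional _
  set vv : Fin d → ℝ := fun i => (v i : ℝ) with hvv
  let f : (Fin d → ℝ) ≃ₜ (Fin d → ℝ) :=
  { toFun := fun x => Matrix.vecMul x M + vv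
    invFun := fun y => Matrix.vecMul (y - vv) M⁻¹
    left_inv := fun x => by
      simp only [add_sub_cancel_right, Matrix.vecMul_vecMul, hMM, Matrix.vecMul_one]
    right_inv := fun y => by
      simp only [Matrix.vecMul_vecMul, hM'M, Matrix.vecMul_one, sub_add_cancel]
    continuous_toFun := (hcont M).add continuous_const
    continuous_invFun := (hcont M⁻¹).comp (continuous_id.sub continuous_const) }
  have himg : Q = f '' A := hQA
  have hsub : f '' interior A ⊆ interior Q := by
    rw [himg]; exact f.isOpenMap.image_interior_subset A
  have hlat : ∀ u : Fin d → ℤ, f (fun i => (u i : ℝ)) ∈ latticePoints d := by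
    intro u i
    refine ⟨(∑ j, u j * U j i) + v i, ?_⟩
    show (Matrix.vecMul (fun i => (u i : ℝ)) M + vv) i = _
    simp only [Pi.add_apply, Matrix.vecMul, dotProduct, hM, Matrix.map_apply, hvv]
    push_cast
    ring
  have hzero : ∀ u : Fin d → ℤ, (fun i => (u i : ℝ)) ∈ interior A →
      f (fun i => (u i : ℝ)) = 0 := by
    intro u hu
    have hm : f (fun i => (u i : ℝ)) ∈ interior Q ∩ latticePoints d :=
      ⟨hsub ⟨_, hu, rfl⟩, hlat u⟩
    rw [hQ.1] at hm
    exact hm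
  have : (fun i => (z i : ℝ)) = fun i => (w i : ℝ) :=
    f.injective ((hzero z hz).trans (hzero w hw).symm)
  exact hzw (castVec_injective this)

/-- for strictly increasing `s` and `c ≥ 3`, the dilate
`c • P_d^(s)` is not unimodularly equivalent to a reflexive polytope;
consequently `P_d^(s)` is not Gorenstein of index `c`. -/
theorem stmt_4 (d : ℕ) (hd : 0 < d) (s : Fin d → ℕ) (hpos : ∀ i, 0 < s i)
    (hinc : StrictMono s) (c : ℕ) (hc : 3 ≤ c) :
    (¬ ∃ Q : Set (Fin d → ℝ),
        UnimodularlyEquivalent ((c : ℝ) • lectureHall d s) Q ∧ IsReflexive Q) ∧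
    ¬ GorensteinOfIndex (lectureHall d s) c := by
  have hcR : (3 : ℝ) ≤ (c : ℝ) := by exact_mod_cast hc
  have hcpos : (0 : ℝ) < (c : ℝ) := by linarith
  have main : ¬ ∃ Q : Set (Fin d → ℝ),
      UnimodularlyEquivalent ((c : ℝ) • lectureHall d s) Q ∧ IsReflexive Q := by
    rintro ⟨Q, hequiv, hrefl⟩
    set i0 : Fin d := ⟨0, hd⟩ with hi0
    set il : Fin d := ⟨d - 1, Nat.sub_lt hd Nat.one_pos⟩ with hil
    -- the open region strictly inside `c • P`
    set O : Set (Fin d → ℝ) :=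
      ({x | 0 < x i0} ∩ ⋂ (i : Fin d), ⋂ (hi : (i : ℕ) + 1 < d),
         {x : Fin d → ℝ | x i * (s ⟨(i : ℕ) + 1, hi⟩ : ℝ) < x ⟨(i : ℕ) + 1, hi⟩ * (s i : ℝ)}) ∩
      {x | x il < (c : ℝ) * (s il : ℝ)} with hO
    have hOopen : IsOpen O := by
      refine (IsOpen.inter ?_ ?_).inter ?_
      · exact isOpen_lt continuous_const (continuous_apply i0)
      · refine isOpen_iInter_of_finite fun i => isOpen_iInter_of_finite fun hi => ?_
        exact isOpen_lt ((continuous_apply i).mul continuous_const)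
          ((continuous_apply _).mul continuous_const)
      · exact isOpen_lt (continuous_apply il) continuous_const
    have hOsub : O ⊆ (c : ℝ) • lectureHall d s := by
      rintro x ⟨⟨h0, hmid⟩, hlast⟩
      rw [Set.mem_smul_set_iff_inv_smul_mem₀ (ne_of_gt hcpos)]
      refine ⟨?_, ?_, ?_⟩
      · intro h
        have hs : (0 : ℝ) < s ⟨0, h⟩ := by exact_mod_cast hpos _
        have hx0 : (0 : ℝ) < x ⟨0, h⟩ := h0
        have : (0 : ℝ) ≤ ((c : ℝ)⁻¹ • x) ⟨0, h⟩ := by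
          simp only [Pi.smul_apply, smul_eq_mul]
          positivity
        exact div_nonneg this hs.le
      · intro i hi
        have hmi : x i * (s ⟨(i : ℕ) + 1, hi⟩ : ℝ) < x ⟨(i : ℕ) + 1, hi⟩ * (s i : ℝ) :=
          Set.mem_iInter.mp (Set.mem_iInter.mp hmid i) hi
        have hsi : (0 : ℝ) < s i := by exact_mod_cast hpos i
        have hsi1 : (0 : ℝ) < s ⟨(i : ℕ) + 1, hi⟩ := by exact_mod_cast hpos _
        have hci : (0 : ℝ) < (c : ℝ)⁻¹ := by positivity
        simp only [Pi.smul_apply, smul_eq_mul]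
        rw [div_le_div_iff₀ hsi hsi1]
        nlinarith
      · intro h
        have hsl : (0 : ℝ) < s ⟨d - 1, Nat.sub_lt h Nat.one_pos⟩ := by exact_mod_cast hpos _
        have hx : x ⟨d - 1, Nat.sub_lt h Nat.one_pos⟩ < (c : ℝ) * (s ⟨d - 1, Nat.sub_lt h Nat.one_pos⟩ : ℝ) := hlast
        simp only [Pi.smul_apply, smul_eq_mul]
        rw [div_le_one hsl]
        rw [inv_mul_le_iff₀ hcpos]
        exact hx.le
      -- interior lattice points
    set z : Fin d → ℤ := fun i => 2 * (s i : ℤ) - (s i0 : ℤ) with hz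
    set w : Fin d → ℤ := fun i => z i + (if i = il then 1 else 0) with hw
    have hs0R : (1 : ℝ) ≤ (s i0 : ℝ) := by exact_mod_cast hpos i0
    have hsleR : ∀ i : Fin d, (s i0 : ℝ) ≤ (s i : ℝ) := by
      intro i
      have : s i0 ≤ s i := hinc.monotone (by rw [Fin.le_def]; exact Nat.zero_le _)
      exact_mod_cast this
    have hsR : ∀ i : Fin d, (1 : ℝ) ≤ (s i : ℝ) := fun i => by exact_mod_cast hpos i
    have hmono : ∀ (i : Fin d) (hi : (i : ℕ) + 1 < d),
        (s i : ℝ) < (s ⟨(i : ℕ) + 1, hi⟩ : ℝ) := by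
      intro i hi
      have : s i < s ⟨(i : ℕ) + 1, hi⟩ :=
        hinc (by rw [Fin.lt_def]; exact Nat.lt_succ_self _)
      exact_mod_cast this
    have hinotl : ∀ (i : Fin d), (i : ℕ) + 1 < d → i ≠ il := by
      intro i hi hEq
      have : (i : ℕ) = d - 1 := by rw [hEq]
      omega
    have hzO : (fun i => (z i : ℝ)) ∈ O := by
      refine ⟨⟨?_, ?_⟩, ?_⟩
      · show (0 : ℝ) < ((z i0 : ℤ) : ℝ)
        rw [hz]; push_cast; nlinarith [hs0R]
      · refine Set.mem_iInter.mpr fun i => Set.mem_iInter.mpr fun hi => ?_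
        show ((z i : ℤ) : ℝ) * _ < ((z ⟨(i : ℕ) + 1, hi⟩ : ℤ) : ℝ) * _
        rw [hz]; push_cast
        nlinarith [hmono i hi, hsleR i, hs0R, hsR i]
      · show ((z il : ℤ) : ℝ) < _
        rw [hz]; push_cast
        nlinarith [hsR il, hs0R, hcR]
    have hwO : (fun i => (w i : ℝ)) ∈ O := by
      refine ⟨⟨?_, ?_⟩, ?_⟩
      · show (0 : ℝ) < ((w i0 : ℤ) : ℝ)
        have h1 : (0 : ℤ) ≤ (if i0 = il then 1 else 0) := by split <;> norm_num
        rw [hw, hz]; push_cast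
        have h1R : (0 : ℝ) ≤ ((if i0 = il then (1 : ℤ) else 0 : ℤ) : ℝ) := by exact_mod_cast h1
        push_cast at h1R
        nlinarith [hs0R]
      · refine Set.mem_iInter.mpr fun i => Set.mem_iInter.mpr fun hi => ?_
        show ((w i : ℤ) : ℝ) * _ < ((w ⟨(i : ℕ) + 1, hi⟩ : ℤ) : ℝ) * _
        have hwi : w i = z i := by rw [hw]; simp [hinotl i hi]
        have hwi1 : z ⟨(i : ℕ) + 1, hi⟩ ≤ w ⟨(i : ℕ) + 1, hi⟩ := by
          have h0 : (0 : ℤ) ≤ (if (⟨(i : ℕ) + 1, hi⟩ : Fin d) = il then 1 else 0) := by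
            split <;> norm_num
          rw [hw]
          exact le_add_of_nonneg_right h0
        have hwi1R : ((z ⟨(i : ℕ) + 1, hi⟩ : ℤ) : ℝ) ≤ ((w ⟨(i : ℕ) + 1, hi⟩ : ℤ) : ℝ) := by
          exact_mod_cast hwi1
        rw [hwi]
        have hzmid : ((z i : ℤ) : ℝ) * (s ⟨(i : ℕ) + 1, hi⟩ : ℝ)
            < ((z ⟨(i : ℕ) + 1, hi⟩ : ℤ) : ℝ) * (s i : ℝ) := by
          rw [hz]; push_cast
          nlinarith [hmono i hi, hsleR i, hs0R, hsR i]
        have hsipos : (0 : ℝ) < (s i : ℝ) := by exact_mod_cast hpos i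
        nlinarith
      · show ((w il : ℤ) : ℝ) < _
        have : w il = z il + 1 := by rw [hw]; simp
        rw [this, hz]; push_cast
        nlinarith [hsR il, hs0R, hcR]
    have hzw : z ≠ w := by
      intro h
      have := congrFun h il
      rw [hw] at this
      simp at this
    exact two_interior_lattice_not_reflexive hequiv hrefl z w
      (interior_maximal hOsub hOopen hzO) (interior_maximal hOsub hOopen hwO) hzw
  exact ⟨main, fun hG => main hG.2.1⟩
end

section
/- Let d ≥ 1, let 1 ≤ i ≤ d, and let s = (s_1,…,s_d) be a sequence of positive integers with s_1 = s_2 = ⋯ = s_i and s_j < s_{j+1} for all i ≤ j ≤ d−1. The topological interior of P_d^{(s)} contains exactly one lattice point if and only if s_1 = ⋯ = s_i = i+1 and s_{j+1} ≤ 2 s_j for all i ≤ j ≤ d−1. Moreover, in this case the unique interior lattice point is the point p ∈ ℤ^d with p_j = j for 1 ≤ j ≤ i and p_j = s_j − 1 for i < j ≤ d. -/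
open Pointwise BigOperators

/-!
Clearing denominators, a lattice point `p` lies in the interior of `P_d^(s)` iff `0 < p₁`,
`p_j s_{j+1} < p_{j+1} s_j` and `p_d < s_d`. Reading these backwards gives `p_j ≤ s_j - 1`, and on
the constant block `p` is strictly increasing, so `j ≤ p_j ≤ s₁ - 1 - (i - j)`; hence an interior
lattice point forces `s₁ ≥ i + 1`. Once `s₁ ≥ i + 1`, the point `(1, …, i, s_{i+1} - 1, …, s_d - 1)`
is interior. If `s₁ ≥ i + 2` its block can be shifted up by one, and if `s_{j+1} > 2 s_j` its
`(j+1)`-st entry can be lowered by one: either way there is a second interior lattice point.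
Conversely, if `s₁ = i + 1` the block is forced to be `1, …, i`, and `s_{j+1} ≤ 2 s_j` propagates
`p_j = s_j - 1` to `p_{j+1} > s_{j+1} (s_j - 1) / s_j ≥ s_{j+1} - 2`.
-/

open Filter Topology

theorem exists_pos_add_smul_mem_of_mem_interior {E : Type*} [AddCommGroup E] [Module ℝ E]
    [TopologicalSpace E] [ContinuousAdd E] [ContinuousSMul ℝ E] {A : Set E} {x : E}
    (hx : x ∈ interior A) (v : E) : ∃ t : ℝ, 0 < t ∧ x + t • v ∈ A := by
  have hcont : Tendsto (fun t : ℝ => x + t • v) (𝓝 0) (𝓝 x) := by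
    simpa using (show Continuous fun t : ℝ => x + t • v by fun_prop).tendsto 0
  have hA : ∀ᶠ t in 𝓝[>] (0 : ℝ), x + t • v ∈ A :=
    nhdsWithin_le_nhds (hcont (mem_interior_iff_mem_nhds.1 hx))
  obtain ⟨t, hxt, ht⟩ := (hA.and self_mem_nhdsWithin).exists
  exact ⟨t, ht, hxt⟩

theorem add_le_of_forall_lt_succ {p : ℕ → ℤ} {n : ℕ} (h : ∀ m, m < n → p m < p (m + 1))
    {j k : ℕ} (hjk : j ≤ k) (hkn : k ≤ n) : p j + (k - j : ℕ) ≤ p k := by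
  induction k, hjk using Nat.le_induction with
  | base => simp
  | succ k hjk ih =>
    have := h k (by omega)
    have := ih (by omega)
    push_cast [Nat.sub_add_comm hjk]
    omega

section FinRestrict

variable {α : Type*} [Inhabited α] {d : ℕ} {P : (Fin d → α) → Prop} {Q : (ℕ → α) → Prop}

theorem iff_extend_of_restrict (hPQ : ∀ F : ℕ → α, P (fun j => F j) ↔ Q F) (p : Fin d → α) :
    P p ↔ Q (Function.extend Fin.val p default) := by
  rw [← hPQ]; simp only [Fin.val_injective.extend_apply]

theorem existsUnique_iff_of_restrict (hPQ : ∀ F : ℕ → α, P (fun j => F j) ↔ Q F) :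
    (∃! p, P p) ↔ (∃ F, Q F) ∧ ∀ F G, Q F → Q G → ∀ k, k < d → F k = G k := by
  refine ⟨fun ⟨p, hp, huniq⟩ =>
    ⟨⟨_, (iff_extend_of_restrict hPQ p).1 hp⟩, fun F G hF hG k hk => ?_⟩,
    fun ⟨⟨F, hF⟩, huniq⟩ => ⟨fun j => F j, (hPQ F).2 hF, fun p hp => funext fun j => ?_⟩⟩
  · exact congrFun ((huniq _ ((hPQ F).2 hF)).trans (huniq _ ((hPQ G).2 hG)).symm) ⟨k, hk⟩
  · rw [← huniq _ F ((iff_extend_of_restrict hPQ p).1 hp) hF j j.isLt,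
      Fin.val_injective.extend_apply]

theorem eq_of_restrict (hPQ : ∀ F : ℕ → α, P (fun j => F j) ↔ Q F) {c : ℕ → α}
    (h : ∀ F, Q F → ∀ k, k < d → F k = c k) : ∀ p, P p → p = fun j : Fin d => c j :=
  fun p hp => funext fun j => by
    rw [← h _ ((iff_extend_of_restrict hPQ p).1 hp) j j.isLt, Fin.val_injective.extend_apply]

end FinRestrict

def strictLectureHall (d : ℕ) (s : Fin d → ℕ) : Set (Fin d → ℝ) :=
  {x | (∀ h : 0 < d, 0 < x ⟨0, h⟩ / (s ⟨0, h⟩ : ℝ)) ∧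
       (∀ i : Fin d, ∀ hi : (i : ℕ) + 1 < d,
          x i / (s i : ℝ) < x ⟨(i : ℕ) + 1, hi⟩ / (s ⟨(i : ℕ) + 1, hi⟩ : ℝ)) ∧
       (∀ h : 0 < d,
          x ⟨d - 1, Nat.sub_lt h Nat.one_pos⟩ / (s ⟨d - 1, Nat.sub_lt h Nat.one_pos⟩ : ℝ) < 1)}

theorem isOpen_strictLectureHall (d : ℕ) (s : Fin d → ℕ) : IsOpen (strictLectureHall d s) := by
  simp only [strictLectureHall, Set.ofPred_and, Set.ofPred_forall]
  refine (isOpen_iInter_of_finite fun _ => ?_).inter ((isOpen_iInter_of_finite fun _ =>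
    isOpen_iInter_of_finite fun _ => ?_).inter (isOpen_iInter_of_finite fun _ => ?_)) <;>
  exact isOpen_lt (by fun_prop) (by fun_prop)

theorem strictLectureHall_subset (d : ℕ) (s : Fin d → ℕ) :
    strictLectureHall d s ⊆ lectureHall d s :=
  fun _ ⟨h0, hstep, hlast⟩ =>
    ⟨fun h => (h0 h).le, fun j hj => (hstep j hj).le, fun h => (hlast h).le⟩

theorem interior_lectureHall_s5 {d : ℕ} {s : Fin d → ℕ} (hs : ∀ j, 0 < s j) :
    interior (lectureHall d s) = strictLectureHall d s := by
  refine subset_antisymm (fun x hx => ?_)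
    (interior_maximal (strictLectureHall_subset d s) (isOpen_strictLectureHall d s))
  have hsR : ∀ j, (0 : ℝ) < s j := fun j => by exact_mod_cast hs j
  have nudge := fun v => exists_pos_add_smul_mem_of_mem_interior hx v
  refine ⟨fun h => ?_, fun j hj => ?_, fun h => ?_⟩
  · obtain ⟨t, ht, hmem⟩ := nudge (Pi.single ⟨0, h⟩ (-1))
    have := hmem.1 h
    simp only [Pi.add_apply, Pi.smul_apply, smul_eq_mul, Pi.single_eq_same] at this
    rw [le_div_iff₀ (hsR _), zero_mul] at this
    exact div_pos (by linarith) (hsR _)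
  · obtain ⟨t, ht, hmem⟩ := nudge (Pi.single j 1)
    have := hmem.2.1 j hj
    have hne : (⟨(j : ℕ) + 1, hj⟩ : Fin d) ≠ j := fun h => by simpa using congrArg Fin.val h
    simp only [Pi.add_apply, Pi.smul_apply, smul_eq_mul, Pi.single_eq_same,
      Pi.single_eq_of_ne hne, mul_zero, add_zero] at this
    exact lt_of_lt_of_le ((div_lt_div_iff_of_pos_right (hsR j)).2 (by linarith)) this
  · obtain ⟨t, ht, hmem⟩ := nudge (Pi.single ⟨d - 1, Nat.sub_lt h Nat.one_pos⟩ 1)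
    have := hmem.2.2 h
    simp only [Pi.add_apply, Pi.smul_apply, smul_eq_mul, Pi.single_eq_same, mul_one] at this
    exact lt_of_lt_of_le ((div_lt_div_iff_of_pos_right (hsR _)).2 (by linarith)) this

/-- The interior lattice points of `lectureHall`, with denominators cleared and with `s` and `p`
extended to `ℕ`: only their values below `d` matter. -/
def IsStrictLectureHallSeq (d : ℕ) (s p : ℕ → ℤ) : Prop :=
  (0 < d → 0 < p 0) ∧ (∀ k, k + 1 < d → p k * s (k + 1) < p (k + 1) * s k) ∧
    (0 < d → p (d - 1) < s (d - 1))

theorem mem_interior_lectureHall_iff {d : ℕ} {s : Fin d → ℕ} (hs : ∀ j, 0 < s j) {S : ℕ → ℤ}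
    (hS : ∀ j : Fin d, (s j : ℤ) = S j) (F : ℕ → ℤ) :
    (fun j : Fin d => (F j : ℝ)) ∈ interior (lectureHall d s) ↔
      IsStrictLectureHallSeq d S F := by
  have hsR : ∀ j : Fin d, (0 : ℝ) < s j := fun j => by exact_mod_cast hs j
  have hSR : ∀ j : Fin d, (s j : ℝ) = S j := fun j => by exact_mod_cast hS j
  rw [interior_lectureHall_s5 hs]
  refine and_congr (forall_congr' fun hd => ?_)
    (and_congr ⟨fun h k hk => ?_, fun h j hj => ?_⟩ (forall_congr' fun hd => ?_))
  · rw [div_pos_iff_of_pos_right (hsR _)]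
    exact Int.cast_pos
  · have := h ⟨k, by omega⟩ hk
    rw [div_lt_div_iff₀ (hsR _) (hsR _), hSR, hSR] at this
    dsimp only at this
    exact_mod_cast this
  · rw [div_lt_div_iff₀ (hsR _) (hsR _), hSR, hSR]
    dsimp only
    exact_mod_cast h j hj
  · rw [div_lt_one (hsR _), hSR]
    exact Int.cast_lt

def candidateSeq (i : ℕ) (a : ℤ) (s : ℕ → ℤ) (k : ℕ) : ℤ :=
  if k < i then k + a else s k - 1

theorem candidateSeq_eq_sub_one {i : ℕ} {s : ℕ → ℤ} (hconst : ∀ k, k < i → s k = s 0)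
    (hs0 : s 0 = i + 1) {k : ℕ} (hk : i ≤ k + 1) : candidateSeq i 1 s k = s k - 1 := by
  unfold candidateSeq
  split_ifs with hki
  · rw [hconst k hki, hs0]
    have : (k : ℤ) + 1 = i := by exact_mod_cast (show k + 1 = i by omega)
    omega
  · rfl

namespace IsStrictLectureHallSeq

variable {d i : ℕ} {s p : ℕ → ℤ}

theorem le_sub_one (hp : IsStrictLectureHallSeq d s p) (hs : ∀ k, k < d → 0 < s k)
    {k : ℕ} (hk : k < d) : p k ≤ s k - 1 := by
  have hd : 0 < d := by omega
  have hkd : k ≤ d - 1 := by omega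
  clear hk
  induction hkd using Nat.decreasingInduction with
  | self => linarith [hp.2.2 hd]
  | of_succ k hkd ih =>
    have hstep := hp.2.1 k (by omega)
    have hsk1 := hs (k + 1) (by omega)
    have : p k * s (k + 1) < s k * s (k + 1) := by nlinarith [hs k (by omega)]
    linarith [lt_of_mul_lt_mul_right this hsk1.le]

theorem lt_succ_of_eq (hp : IsStrictLectureHallSeq d s p) {k : ℕ} (hk : k + 1 < d)
    (hsk : 0 < s k) (heq : s (k + 1) = s k) : p k < p (k + 1) := by
  have := hp.2.1 k hk
  rw [heq] at this
  exact lt_of_mul_lt_mul_right this hsk.le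

theorem bounds_of_lt (hp : IsStrictLectureHallSeq d s p) (hs : ∀ k, k < d → 0 < s k)
    (hid : i ≤ d) (hconst : ∀ k, k < i → s k = s 0) {k : ℕ} (hki : k < i) :
    (k : ℤ) + 1 ≤ p k ∧ p k + (i - 1 - k : ℕ) ≤ s 0 - 1 := by
  have hmono : ∀ m, m < i - 1 → p m < p (m + 1) := fun m hm =>
    hp.lt_succ_of_eq (by omega) (hs m (by omega))
      (by rw [hconst m (by omega), hconst (m + 1) (by omega)])
  have hlow := add_le_of_forall_lt_succ hmono (Nat.zero_le k) (by omega)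
  have hhigh := add_le_of_forall_lt_succ hmono (show k ≤ i - 1 by omega) le_rfl
  have htop := hp.le_sub_one hs (show i - 1 < d by omega)
  rw [hconst (i - 1) (by omega)] at htop
  have := hp.1 (by omega)
  simp only [Nat.sub_zero] at hlow
  constructor <;> omega

theorem add_one_le_s_zero (hp : IsStrictLectureHallSeq d s p) (hs : ∀ k, k < d → 0 < s k)
    (hi : 0 < i) (hid : i ≤ d) (hconst : ∀ k, k < i → s k = s 0) : (i : ℤ) + 1 ≤ s 0 := by
  have := hp.bounds_of_lt hs hid hconst hi
  push_cast at this
  omega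

theorem eq_of_lt (hp : IsStrictLectureHallSeq d s p) (hs : ∀ k, k < d → 0 < s k)
    (hid : i ≤ d) (hconst : ∀ k, k < i → s k = s 0) (hs0 : s 0 = i + 1) {k : ℕ} (hki : k < i) :
    p k = k + 1 := by
  have := hp.bounds_of_lt hs hid hconst hki
  push_cast [Nat.sub_sub, Nat.cast_sub (show k + 1 ≤ i by omega)] at this
  omega

theorem eq_sub_one_succ (hp : IsStrictLectureHallSeq d s p) (hs : ∀ k, k < d → 0 < s k)
    {k : ℕ} (hk : k + 1 < d) (hconv : s (k + 1) ≤ 2 * s k) (hpk : p k = s k - 1) :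
    p (k + 1) = s (k + 1) - 1 := by
  have hstep := hp.2.1 k hk
  have hup := hp.le_sub_one hs hk
  have hsk := hs k (by omega)
  rw [hpk] at hstep
  nlinarith

theorem eq_candidateSeq (hp : IsStrictLectureHallSeq d s p) (hs : ∀ k, k < d → 0 < s k)
    (hi : 0 < i) (hid : i ≤ d) (hconst : ∀ k, k < i → s k = s 0) (hs0 : s 0 = i + 1)
    (hconv : ∀ k, k + 1 < d → i ≤ k + 1 → s (k + 1) ≤ 2 * s k) :
    ∀ k, k < d → p k = candidateSeq i 1 s k := by
  have htail : ∀ k, i - 1 ≤ k → k < d → p k = s k - 1 := by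
    intro k hik
    induction k, hik using Nat.le_induction with
    | base =>
      intro _
      rw [hp.eq_of_lt hs hid hconst hs0 (by omega),
        ← candidateSeq_eq_sub_one hconst hs0 (by omega), candidateSeq, if_pos (by omega)]
    | succ k hik ih =>
      intro hk
      exact hp.eq_sub_one_succ hs hk (hconv k hk (by omega)) (ih (by omega))
  intro k hk
  unfold candidateSeq
  split_ifs with hki
  · exact hp.eq_of_lt hs hid hconst hs0 hki
  · exact htail k (by omega) hk

theorem update_succ (hp : IsStrictLectureHallSeq d s p) (hs : ∀ k, k < d → 0 ≤ s k)
    {k : ℕ} (hk : k + 1 < d) {v : ℤ} (hv : v ≤ p (k + 1)) (hlt : p k * s (k + 1) < v * s k) :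
    IsStrictLectureHallSeq d s (Function.update p (k + 1) v) := by
  obtain ⟨h0, hstep, hlast⟩ := hp
  refine ⟨fun hd => ?_, fun m hm => ?_, fun hd => ?_⟩
  · rw [Function.update_of_ne (by omega)]; exact h0 hd
  · rcases lt_trichotomy m k with hmk | rfl | hmk
    · rw [Function.update_of_ne (by omega), Function.update_of_ne (by omega)]
      exact hstep m hm
    · rwa [Function.update_of_ne (by omega), Function.update_self]
    · rcases Nat.lt_or_ge (k + 1) m with hkm | hkm
      · rw [Function.update_of_ne (by omega), Function.update_of_ne (by omega)]
        exact hstep m hm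
      · obtain rfl : m = k + 1 := by omega
        rw [Function.update_self, Function.update_of_ne (by omega)]
        nlinarith [hstep (k + 1) hm, hs (k + 1 + 1) hm]
  · by_cases hlast' : d - 1 = k + 1
    · rw [hlast', Function.update_self]; rw [hlast'] at hlast; linarith [hlast hd]
    · rw [Function.update_of_ne hlast']; exact hlast hd

end IsStrictLectureHallSeq

theorem isStrictLectureHallSeq_candidateSeq {d i : ℕ} {s : ℕ → ℤ} {a : ℤ}
    (hs : ∀ k, k < d → 0 < s k) (hi : 0 < i) (hconst : ∀ k, k < i → s k = s 0)
    (hinc : ∀ k, k + 1 < d → i ≤ k + 1 → s k < s (k + 1)) (ha : 1 ≤ a) (hsa : i + a ≤ s 0) :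
    IsStrictLectureHallSeq d s (candidateSeq i a s) := by
  refine ⟨fun _ => ?_, fun k hk => ?_, fun hd => ?_⟩
  · rw [candidateSeq, if_pos hi]; omega
  · have hsk := hs k (by omega)
    rcases Nat.lt_or_ge (k + 1) i with hblock | htail
    · simp only [candidateSeq, if_pos hblock, if_pos (show k < i by omega)]
      rw [hconst k (by omega), hconst (k + 1) hblock]
      push_cast
      nlinarith
    · have hsk1 := hinc k hk htail
      rcases Nat.lt_or_ge k i with hcross | htail'
      · simp only [candidateSeq, if_pos hcross, if_neg (show ¬ k + 1 < i by omega)]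
        rw [hconst k hcross] at hsk1 ⊢
        have : (k : ℤ) + 1 = i := by exact_mod_cast (show k + 1 = i by omega)
        nlinarith
      · simp only [candidateSeq, if_neg (show ¬ k < i by omega),
          if_neg (show ¬ k + 1 < i by omega)]
        nlinarith
  · rcases Nat.lt_or_ge (d - 1) i with hblock | htail
    · simp only [candidateSeq, if_pos hblock]
      rw [hconst _ hblock]
      omega
    · simp only [candidateSeq, if_neg (show ¬ d - 1 < i by omega)]
      omega

theorem IsStrictLectureHallSeq.conditions_of_unique {d i : ℕ} {s p : ℕ → ℤ}
    (hp : IsStrictLectureHallSeq d s p) (hs : ∀ k, k < d → 0 < s k)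
    (hi : 0 < i) (hid : i ≤ d) (hconst : ∀ k, k < i → s k = s 0)
    (hinc : ∀ k, k + 1 < d → i ≤ k + 1 → s k < s (k + 1))
    (huniq : ∀ q r, IsStrictLectureHallSeq d s q → IsStrictLectureHallSeq d s r →
      ∀ k, k < d → q k = r k) :
    s 0 = i + 1 ∧ ∀ k, k + 1 < d → i ≤ k + 1 → s (k + 1) ≤ 2 * s k := by
  have hs0 : s 0 = i + 1 := by
    refine le_antisymm ?_ (hp.add_one_le_s_zero hs hi hid hconst)
    by_contra! hs0
    have := huniq _ _ (isStrictLectureHallSeq_candidateSeq hs hi hconst hinc le_rfl (by omega))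
      (isStrictLectureHallSeq_candidateSeq (a := 2) hs hi hconst hinc (by norm_num) (by omega))
      0 (by omega)
    simp [candidateSeq, hi] at this
  refine ⟨hs0, fun k hk hik => ?_⟩
  by_contra! hviol
  have hq := isStrictLectureHallSeq_candidateSeq hs hi hconst hinc le_rfl (by omega)
  have hqk := candidateSeq_eq_sub_one hconst hs0 hik
  have hqk1 := candidateSeq_eq_sub_one hconst hs0 (k := k + 1) (by omega)
  have hupd := hq.update_succ (fun k hk => (hs k hk).le) hk (v := s (k + 1) - 2) (by omega)
    (by rw [hqk]; nlinarith [hs k (by omega)])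
  have := huniq _ _ hq hupd (k + 1) hk
  rw [Function.update_self, hqk1] at this
  omega

theorem lectureHall_conditions_iff {d i : ℕ} (hd : 0 < d) (hi : 0 < i) {s : Fin d → ℕ}
    {S : ℕ → ℤ} (hS : ∀ j : Fin d, (s j : ℤ) = S j)
    (hconst : ∀ j : Fin d, (j : ℕ) < i → s j = s ⟨0, hd⟩) :
    ((∀ j : Fin d, (j : ℕ) < i → s j = i + 1) ∧
        ∀ j : Fin d, ∀ hj : (j : ℕ) + 1 < d, i ≤ (j : ℕ) + 1 → s ⟨(j : ℕ) + 1, hj⟩ ≤ 2 * s j) ↔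
      S 0 = i + 1 ∧ ∀ k, k + 1 < d → i ≤ k + 1 → S (k + 1) ≤ 2 * S k := by
  have hS0 : S 0 = s ⟨0, hd⟩ := (hS ⟨0, hd⟩).symm
  refine and_congr ⟨fun h => ?_, fun h j hj => ?_⟩ ⟨fun h k hk hik => ?_, fun h j hj hij => ?_⟩
  · rw [hS0, h ⟨0, hd⟩ hi]; push_cast; rfl
  · rw [hconst j hj]; exact_mod_cast hS0.symm.trans h
  · rw [← hS ⟨k, by omega⟩, ← hS ⟨k + 1, hk⟩]; exact_mod_cast h ⟨k, by omega⟩ hk hik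
  · have := h j hj hij
    rw [← hS j, ← hS ⟨j + 1, hj⟩] at this
    exact_mod_cast this
/-- for `s` constant equal on the first `i` entries and strictly
increasing afterwards, the interior of `P_d^(s)` contains exactly one lattice
point iff `s_1 = ⋯ = s_i = i + 1` and `s_{j+1} ≤ 2 s_j` for `j ≥ i`; the unique
interior lattice point is `(1, 2, …, i, s_{i+1} - 1, …, s_d - 1)`. -/
theorem stmt_5 (d i : ℕ) (hd : 0 < d) (hi1 : 1 ≤ i) (hid : i ≤ d)
    (s : Fin d → ℕ) (hpos : ∀ j, 0 < s j)
    (hconst : ∀ j : Fin d, (j : ℕ) < i → s j = s ⟨0, hd⟩)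
    (hinc : ∀ j : Fin d, ∀ hj : (j : ℕ) + 1 < d, i ≤ (j : ℕ) + 1 →
      s j < s ⟨(j : ℕ) + 1, hj⟩) :
    ((∃! p : Fin d → ℤ, (fun j => (p j : ℝ)) ∈ interior (lectureHall d s)) ↔
      ((∀ j : Fin d, (j : ℕ) < i → s j = i + 1) ∧
        ∀ j : Fin d, ∀ hj : (j : ℕ) + 1 < d, i ≤ (j : ℕ) + 1 →
          s ⟨(j : ℕ) + 1, hj⟩ ≤ 2 * s j)) ∧
    (((∀ j : Fin d, (j : ℕ) < i → s j = i + 1) ∧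
        ∀ j : Fin d, ∀ hj : (j : ℕ) + 1 < d, i ≤ (j : ℕ) + 1 →
          s ⟨(j : ℕ) + 1, hj⟩ ≤ 2 * s j) →
      ∀ p : Fin d → ℤ, (fun j => (p j : ℝ)) ∈ interior (lectureHall d s) →
        p = fun j : Fin d => if (j : ℕ) < i then ((j : ℕ) : ℤ) + 1 else (s j : ℤ) - 1) := by
  obtain ⟨S, hS⟩ : ∃ S : ℕ → ℤ, ∀ j : Fin d, (s j : ℤ) = S j :=
    ⟨Function.extend Fin.val (fun j => (s j : ℤ)) 0,
      fun j => (Fin.val_injective.extend_apply (fun j => (s j : ℤ)) 0 j).symm⟩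
  have hSpos : ∀ k, k < d → 0 < S k := fun k hk => by
    rw [← hS ⟨k, hk⟩]; exact_mod_cast hpos _
  have hSconst : ∀ k, k < i → S k = S 0 := fun k hk => by
    rw [← hS ⟨k, by omega⟩, ← hS ⟨0, hd⟩, hconst ⟨k, by omega⟩ hk]
  have hSinc : ∀ k, k + 1 < d → i ≤ k + 1 → S k < S (k + 1) := fun k hk hik => by
    rw [← hS ⟨k, by omega⟩, ← hS ⟨k + 1, hk⟩]; exact_mod_cast hinc ⟨k, by omega⟩ hk hik
  have hpoint : (fun j : Fin d => if (j : ℕ) < i then ((j : ℕ) : ℤ) + 1 else (s j : ℤ) - 1) =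
      fun j : Fin d => candidateSeq i 1 S j := by
    funext j; simp only [candidateSeq, hS]
  have hmem := mem_interior_lectureHall_iff hpos hS
  rw [lectureHall_conditions_iff hd hi1 hS hconst, hpoint, existsUnique_iff_of_restrict hmem]
  refine ⟨⟨fun ⟨⟨p, hp⟩, huniq⟩ => hp.conditions_of_unique hSpos hi1 hid hSconst hSinc huniq,
    fun ⟨hs0, hconv⟩ => ⟨⟨candidateSeq i 1 S, ?_⟩, fun p q hp hq k hk => ?_⟩⟩,
    fun ⟨hs0, hconv⟩ => ?_⟩
  · exact isStrictLectureHallSeq_candidateSeq hSpos hi1 hSconst hSinc le_rfl hs0.ge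
  · rw [hp.eq_candidateSeq hSpos hi1 hid hSconst hs0 hconv k hk,
      hq.eq_candidateSeq hSpos hi1 hid hSconst hs0 hconv k hk]
  · exact eq_of_restrict hmem fun p hp => hp.eq_candidateSeq hSpos hi1 hid hSconst hs0 hconv
end

section
/- Let d ≥ 1, let 1 ≤ i ≤ d, and let s = (s_1,…,s_d) be a sequence of positive integers with s_1 = ⋯ = s_i = i+1 and s_j < s_{j+1} ≤ 2 s_j for all i ≤ j ≤ d−1. Then the sequence e with e_j = j for 1 ≤ j ≤ i and e_j = s_j − 1 for i < j ≤ d is the unique s-inversion sequence all of whose d positions 0,1,…,d−1 are ascents; that is, e is the unique integer sequence with 0 ≤ e_j < s_j for all j such that (with e_0 = 0, s_0 = 1) e_j/s_j < e_{j+1}/s_{j+1} holds for every 0 ≤ j ≤ d−1. -/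
open Pointwise BigOperators

lemma div_lt_div_int' (a b : ℤ) (p q : ℕ) (hp : 0 < p) (hq : 0 < q) :
    (a : ℝ) / (p : ℝ) < (b : ℝ) / (q : ℝ) ↔ a * q < b * p := by
  rw [div_lt_div_iff₀ (by exact_mod_cast hp) (by exact_mod_cast hq)]
  exact_mod_cast Iff.rfl

/-- for `s` with `s_1 = ⋯ = s_i = i + 1` and
`s_j < s_{j+1} ≤ 2 s_j` for `i ≤ j ≤ d - 1`, the sequence
`e = (1, 2, …, i, s_{i+1} - 1, …, s_d - 1)` is the unique `s`-inversion sequence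
all of whose positions `0, …, d-1` are ascents. -/
theorem stmt_6 (d i : ℕ) (hd : 0 < d) (hi1 : 1 ≤ i) (hid : i ≤ d)
    (s : Fin d → ℕ) (hpos : ∀ j, 0 < s j)
    (hconst : ∀ j : Fin d, (j : ℕ) < i → s j = i + 1)
    (hinc : ∀ j : Fin d, ∀ hj : (j : ℕ) + 1 < d, i ≤ (j : ℕ) + 1 →
      s j < s ⟨(j : ℕ) + 1, hj⟩ ∧ s ⟨(j : ℕ) + 1, hj⟩ ≤ 2 * s j) :
    ((∀ j : Fin d,
        0 ≤ (if (j : ℕ) < i then ((j : ℕ) : ℤ) + 1 else (s j : ℤ) - 1) ∧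
        (if (j : ℕ) < i then ((j : ℕ) : ℤ) + 1 else (s j : ℤ) - 1) < (s j : ℤ)) ∧
      allAscents d s
        (fun j : Fin d => if (j : ℕ) < i then ((j : ℕ) : ℤ) + 1 else (s j : ℤ) - 1)) ∧
    ∀ e : Fin d → ℤ, (∀ j, 0 ≤ e j ∧ e j < (s j : ℤ)) → allAscents d s e →
      e = fun j : Fin d => if (j : ℕ) < i then ((j : ℕ) : ℤ) + 1 else (s j : ℤ) - 1 :=  by
  constructor
  · refine ⟨fun j => ?_, ?_, ?_⟩
    · by_cases h : (j : ℕ) < i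
      · have hs := hconst j h
        simp only [if_pos h, hs]
        push_cast
        omega
      · have hs := hpos j
        simp only [if_neg h]
        omega
    · -- first ascent
      intro h
      have h0i : ((⟨0, h⟩ : Fin d) : ℕ) < i := hi1
      simp only [if_pos h0i, zero_div]
      apply div_pos
      · push_cast; positivity
      · exact_mod_cast hpos _
    · intro j hj
      have hsj := hpos j
      have hsj' := hpos ⟨(j : ℕ) + 1, hj⟩
      rw [div_lt_div_int' _ _ _ _ hsj hsj']
      by_cases h1 : (j : ℕ) + 1 < i
      · have h0 : (j : ℕ) < i := by omega
        have ha : s j = i + 1 := hconst j h0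
        have hb : s ⟨(j : ℕ) + 1, hj⟩ = i + 1 := hconst _ h1
        simp only [if_pos h0, if_pos h1, ha, hb]
        have : (0 : ℤ) < (i : ℤ) + 1 := by positivity
        push_cast
        nlinarith
      · by_cases h0 : (j : ℕ) < i
        · -- j = i - 1
          have hji : (j : ℕ) + 1 = i := by omega
          have ha : s j = i + 1 := hconst j h0
          have hlt := (hinc j hj (by omega)).1
          simp only [if_pos h0, if_neg h1, ha]
          have h2 : (i : ℤ) + 1 < (s ⟨(j : ℕ) + 1, hj⟩ : ℤ) := by
            rw [ha] at hlt; exact_mod_cast hlt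
          have h3 : ((j : ℕ) : ℤ) + 1 = (i : ℤ) := by exact_mod_cast hji
          rw [h3]
          push_cast
          nlinarith [hi1]
        · have hlt := (hinc j hj (by omega)).1
          simp only [if_neg h0, if_neg h1]
          have h2 : (s j : ℤ) < (s ⟨(j : ℕ) + 1, hj⟩ : ℤ) := by exact_mod_cast hlt
          nlinarith
  · intro e hb ha
    have key : ∀ j : ℕ, ∀ hj : j + 1 < d,
        e ⟨j, Nat.lt_of_succ_lt hj⟩ * (s ⟨j + 1, hj⟩ : ℤ)
          < e ⟨j + 1, hj⟩ * (s ⟨j, Nat.lt_of_succ_lt hj⟩ : ℤ) := by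
      intro j hj
      have h := ha.2 ⟨j, Nat.lt_of_succ_lt hj⟩ hj
      rw [div_lt_div_int' _ _ _ _ (hpos _) (hpos _)] at h
      exact h
    have hL : ∀ j : ℕ, ∀ hj : j < d, j < i → (j : ℤ) + 1 ≤ e ⟨j, hj⟩ := by
      intro j
      induction j with
      | zero =>
        intro hj _
        have h := ha.1 hd
        rw [zero_div] at h
        have hs : (0 : ℝ) < (s ⟨0, hd⟩ : ℝ) := by exact_mod_cast hpos _
        have he : (0 : ℝ) < (e ⟨0, hd⟩ : ℝ) := by
          have := (lt_div_iff₀ hs).mp h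
          linarith
        have : (0 : ℤ) < e ⟨0, hd⟩ := by exact_mod_cast he
        have heq : e ⟨0, hj⟩ = e ⟨0, hd⟩ := rfl
        rw [heq]; omega
      | succ j ih =>
        intro hj hji
        have hj0 : j < d := by omega
        have hji0 : j < i := by omega
        have h1 := ih hj0 hji0
        have h2 := key j hj
        have hsa : s (⟨j, hj0⟩ : Fin d) = i + 1 := hconst _ hji0
        have hsb : s (⟨j + 1, hj⟩ : Fin d) = i + 1 := hconst _ hji
        have heq : e (⟨j, Nat.lt_of_succ_lt hj⟩ : Fin d) = e ⟨j, hj0⟩ := rfl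
        rw [heq, hsa, hsb] at h2
        have hip : (0 : ℤ) < (i : ℤ) + 1 := by positivity
        have h3 : e ⟨j, hj0⟩ < e ⟨j + 1, hj⟩ := by
          have := lt_of_mul_lt_mul_right h2 (by push_cast; omega : (0:ℤ) ≤ ((i:ℕ) + 1 : ℕ))
          exact this
        push_cast
        push_cast at h1
        omega
    have hE : ∀ j : ℕ, ∀ hj : j < d, i ≤ j + 1 → e ⟨j, hj⟩ = (s ⟨j, hj⟩ : ℤ) - 1 := by
      intro j
      induction j with
      | zero =>
        intro hj h
        have hi : i = 1 := by omega
        have h1 := hL 0 hj (by omega)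
        have h2 := (hb ⟨0, hj⟩).2
        have hs : s (⟨0, hj⟩ : Fin d) = i + 1 := hconst _ (show 0 < i by omega)
        rw [hs] at h2 ⊢
        subst hi
        push_cast at h1 h2 ⊢
        omega
      | succ j ih =>
        intro hj hij
        have hjd : j < d := by omega
        by_cases hc : i ≤ j + 1
        · have h0 := ih hjd hc
          have hk := key j hj
          have heq : e (⟨j, Nat.lt_of_succ_lt hj⟩ : Fin d) = e ⟨j, hjd⟩ := rfl
          have heq2 : s (⟨j, Nat.lt_of_succ_lt hj⟩ : Fin d) = s ⟨j, hjd⟩ := rfl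
          rw [heq, heq2, h0] at hk
          have hinc' := hinc ⟨j, hjd⟩ hj hc
          have hlt : (s ⟨j, hjd⟩ : ℤ) < (s ⟨j + 1, hj⟩ : ℤ) := by exact_mod_cast hinc'.1
          have hle : (s ⟨j + 1, hj⟩ : ℤ) ≤ 2 * (s ⟨j, hjd⟩ : ℤ) := by exact_mod_cast hinc'.2
          have hp1 : (1 : ℤ) ≤ (s ⟨j, hjd⟩ : ℤ) := by exact_mod_cast hpos ⟨j, hjd⟩
          have hub := (hb ⟨j + 1, hj⟩).2
          have hge : (s ⟨j + 1, hj⟩ : ℤ) - 1 ≤ e ⟨j + 1, hj⟩ := by nlinarith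
          omega
        · have hji : j + 1 < i := by omega
          have h1 := hL (j + 1) hj hji
          have h2 := (hb ⟨j + 1, hj⟩).2
          have hs : s (⟨j + 1, hj⟩ : Fin d) = i + 1 := hconst _ hji
          rw [hs] at h2 ⊢
          have : i = j + 2 := by omega
          subst this
          push_cast at h1 h2 ⊢
          omega
    have hU : ∀ m j : ℕ, ∀ hj : j < d, j + m = i - 1 → e ⟨j, hj⟩ ≤ (j : ℤ) + 1 := by
      intro m
      induction m with
      | zero =>
        intro j hj h
        have h1 := hE j hj (by omega)
        have hs : s (⟨j, hj⟩ : Fin d) = i + 1 := hconst _ (show j < i by omega)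
        rw [hs] at h1
        have : j = i - 1 := by omega
        push_cast [h1]
        omega
      | succ m ih =>
        intro j hj h
        have hj1 : j + 1 < d := by omega
        have h2 := ih (j + 1) hj1 (by omega)
        have hk := key j hj1
        have hsa : s (⟨j, Nat.lt_of_succ_lt hj1⟩ : Fin d) = i + 1 := hconst _ (show j < i by omega)
        have hsb : s (⟨j + 1, hj1⟩ : Fin d) = i + 1 := hconst _ (show j + 1 < i by omega)
        rw [hsa, hsb] at hk
        have heq : e (⟨j, Nat.lt_of_succ_lt hj1⟩ : Fin d) = e ⟨j, hj⟩ := rfl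
        rw [heq] at hk
        have h3 : e ⟨j, hj⟩ < e ⟨j + 1, hj1⟩ :=
          lt_of_mul_lt_mul_right hk (by push_cast; omega : (0:ℤ) ≤ ((i:ℕ) + 1 : ℕ))
        push_cast at h2 ⊢
        omega
    funext j
    obtain ⟨j, hj⟩ := j
    by_cases h : j < i
    · simp only [if_pos h]
      exact le_antisymm (hU (i - 1 - j) j hj (by omega)) (hL j hj h)
    · simp only [if_neg h]
      exact hE j hj (by omega)
end

section
/- Let d ≥ 1, let 1 ≤ i ≤ d, and let s = (s_1,…,s_d) be a sequence of positive integers with s_1 = ⋯ = s_i = i+1 and s_j < s_{j+1} ≤ 2 s_j for all i ≤ j ≤ d−1 (so that P_d^{(s)} has the unique interior lattice point p with p_j = j for j ≤ i and p_j = s_j − 1 for j > i), and set Q = P_d^{(s)} − p. Then the dual polytope Q^∨ = {y ∈ ℝ^d : ⟨x,y⟩ ≤ 1 for all x ∈ Q} is a lattice polytope, i.e. Q^∨ = conv(Q^∨ ∩ ℤ^d), if and only if for every i ≤ j ≤ d−1 the integer k_j = s_{j+1} − s_j divides both s_j and s_{j+1}. -/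
open Pointwise BigOperators

namespace Stmt7Aux

lemma sum_single' {d : ℕ} (v : ℕ) (hv : v < d) (g : Fin d → ℝ) :
    ∑ j : Fin d, (if (j : ℕ) = v then g j else 0) = g ⟨v, hv⟩ := by
  have h : ∀ j : Fin d, (if (j : ℕ) = v then g j else 0)
      = (if j = ⟨v, hv⟩ then g j else 0) := by
    intro j
    by_cases h : (j : ℕ) = v
    · rw [if_pos h, if_pos (Fin.ext h)]
    · rw [if_neg h, if_neg (fun hh => h (by rw [hh]))]
  rw [Finset.sum_congr rfl (fun j _ => h j), Finset.sum_ite_eq' Finset.univ _ g]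
  simp

lemma sum_two' {d : ℕ} (v1 v2 : ℕ) (hv1 : v1 < d) (hv2 : v2 < d) (hne : v1 ≠ v2)
    (g h : Fin d → ℝ) :
    ∑ j : Fin d, (if (j : ℕ) = v1 then g j else if (j : ℕ) = v2 then h j else 0)
      = g ⟨v1, hv1⟩ + h ⟨v2, hv2⟩ := by
  have key : ∀ j : Fin d,
      (if (j : ℕ) = v1 then g j else if (j : ℕ) = v2 then h j else 0)
      = (if (j : ℕ) = v1 then g j else 0) + (if (j : ℕ) = v2 then h j else 0) := by
    intro j
    by_cases h1 : (j : ℕ) = v1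
    · rw [if_pos h1, if_pos h1, if_neg (fun h2 => hne (h1.symm.trans h2)), add_zero]
    · rw [if_neg h1, if_neg h1, zero_add]
  rw [Finset.sum_congr rfl (fun j _ => key j), Finset.sum_add_distrib,
    sum_single' v1 hv1, sum_single' v2 hv2]

section Abstract

variable {d : ℕ} (Q : Set (Fin d → ℝ)) (V A : Fin (d+1) → Fin d → ℝ)
  (lam : Fin (d+1) → ℝ)

lemma swap_sum (y : Fin d → ℝ)
    (hbary : ∀ j, ∑ r, lam r * V r j = 0) :
    ∑ r, lam r * (∑ j, V r j * y j) = 0 := by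
  calc ∑ r, lam r * (∑ j, V r j * y j)
      = ∑ r, ∑ j, lam r * (V r j * y j) := by simp [Finset.mul_sum]
    _ = ∑ j, ∑ r, lam r * (V r j * y j) := Finset.sum_comm
    _ = ∑ j, (∑ r, lam r * V r j) * y j := by
        refine Finset.sum_congr rfl fun j _ => ?_
        rw [Finset.sum_mul]
        exact Finset.sum_congr rfl fun r _ => by ring
    _ = 0 := by simp [hbary]

/-- key identity `lam m * (1 - ⟨V m, A m⟩) = 1`. -/
lemma key1
    (hpair : ∀ m r, m ≠ r → ∑ j, V r j * A m j = 1)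
    (hlam1 : ∑ r, lam r = 1)
    (hbary : ∀ j, ∑ r, lam r * V r j = 0)
    (m : Fin (d+1)) :
    lam m * (1 - ∑ j, V m j * A m j) = 1 := by
  have h0 : ∑ r, lam r * (∑ j, V r j * A m j) = 0 := swap_sum V lam (A m) hbary
  have h1 : ∀ r : Fin (d+1), lam r * (∑ j, V r j * A m j)
      = lam r - (if r = m then lam m * (1 - ∑ j, V m j * A m j) else 0) := by
    intro r
    by_cases hr : r = m
    · subst hr; simp; ring
    · rw [hpair m r (Ne.symm hr), if_neg hr]; ring
  rw [Finset.sum_congr rfl (fun r _ => h1 r), Finset.sum_sub_distrib,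
    Finset.sum_ite_eq' Finset.univ m, hlam1] at h0
  simp at h0
  linarith

lemma musum
    (hlam1 : ∑ r, lam r = 1)
    (hbary : ∀ j, ∑ r, lam r * V r j = 0)
    (y : Fin d → ℝ) :
    (∑ r, lam r * (1 - ∑ j, V r j * y j)) = 1 := by
  have h0 := swap_sum V lam y hbary
  have : ∑ r, lam r * (1 - ∑ j, V r j * y j)
      = (∑ r, lam r) - ∑ r, lam r * (∑ j, V r j * y j) := by
    rw [← Finset.sum_sub_distrib]
    exact Finset.sum_congr rfl fun r _ => by ring
  rw [this, h0, hlam1]; ring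

/-- Representation of any element of the dual as a convex combination of the `A r`. -/
lemma rep
    (hV : ∀ r, V r ∈ Q)
    (hpair : ∀ m r, m ≠ r → ∑ j, V r j * A m j = 1)
    (hlam0 : ∀ r, 0 ≤ lam r) (hlam1 : ∑ r, lam r = 1)
    (hbary : ∀ j, ∑ r, lam r * V r j = 0)
    (hspan : ∀ u : Fin d → ℝ, (∀ r, ∑ j, V r j * u j = 0) → u = 0)
    (y : Fin d → ℝ) (hy : y ∈ dualPolytope Q) :
    (∀ r, 0 ≤ lam r * (1 - ∑ j, V r j * y j)) ∧
    (∑ r, lam r * (1 - ∑ j, V r j * y j)) = 1 ∧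
    (∀ j, y j = ∑ r, (lam r * (1 - ∑ j', V r j' * y j')) * A r j) := by
  have hc : ∀ r, ∑ j, V r j * y j ≤ 1 := by
    intro r
    have := hy (V r) (hV r)
    calc ∑ j, V r j * y j = ∑ j, V r j * y j := rfl
      _ ≤ 1 := this
  refine ⟨fun r => mul_nonneg (hlam0 r) (by linarith [hc r]),
    musum V lam hlam1 hbary y, ?_⟩
  have hkey := key1 V A lam hpair hlam1 hbary
  have hmain : (fun j => y j - ∑ r, (lam r * (1 - ∑ j', V r j' * y j')) * A r j) = 0 := by
    apply hspan
    intro r'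
    have expand : ∑ j, V r' j * (y j - ∑ r, (lam r * (1 - ∑ j', V r j' * y j')) * A r j)
        = (∑ j, V r' j * y j)
          - ∑ r, (lam r * (1 - ∑ j', V r j' * y j')) * (∑ j, V r' j * A r j) := by
      rw [Finset.sum_congr rfl (fun j _ => mul_sub (V r' j) _ _), Finset.sum_sub_distrib]
      congr 1
      calc ∑ j, V r' j * ∑ r, (lam r * (1 - ∑ j', V r j' * y j')) * A r j
          = ∑ j, ∑ r, (lam r * (1 - ∑ j', V r j' * y j')) * (V r' j * A r j) := by
            refine Finset.sum_congr rfl fun j _ => ?_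
            rw [Finset.mul_sum]
            exact Finset.sum_congr rfl fun r _ => by ring
        _ = ∑ r, ∑ j, (lam r * (1 - ∑ j', V r j' * y j')) * (V r' j * A r j) :=
            Finset.sum_comm
        _ = ∑ r, (lam r * (1 - ∑ j', V r j' * y j')) * (∑ j, V r' j * A r j) := by
            refine Finset.sum_congr rfl fun r _ => ?_
            rw [Finset.mul_sum]
    rw [expand]
    have h2 : ∀ r : Fin (d+1), (lam r * (1 - ∑ j', V r j' * y j')) * (∑ j, V r' j * A r j)
        = (lam r * (1 - ∑ j', V r j' * y j'))
          - (if r = r' then (1 - ∑ j', V r' j' * y j') else 0) := by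
      intro r
      by_cases hr : r = r'
      · subst hr
        rw [if_pos rfl]
        linear_combination (-(1 - ∑ j', V r j' * y j')) * hkey r
      · rw [hpair r r' hr, if_neg hr]
        ring
    rw [Finset.sum_congr rfl (fun r _ => h2 r), Finset.sum_sub_distrib,
      Finset.sum_ite_eq' Finset.univ r', musum V lam hlam1 hbary y]
    simp
  intro j
  have := congrFun hmain j
  simp only [Pi.zero_apply] at this
  linarith

end Abstract
end Stmt7Aux


namespace Stmt7Aux

variable {d : ℕ}

noncomputable def pv (i : ℕ) (s : Fin d → ℕ) (j : Fin d) : ℝ :=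
  if (j : ℕ) < i then ((j : ℕ) : ℝ) + 1 else (s j : ℝ) - 1

noncomputable def wv (s : Fin d → ℕ) (m : Fin (d+1)) (j : Fin d) : ℝ :=
  if (m : ℕ) ≤ (j : ℕ) then (s j : ℝ) else 0

noncomputable def Vv (i : ℕ) (s : Fin d → ℕ) (m : Fin (d+1)) (j : Fin d) : ℝ :=
  wv s m j - pv i s j

noncomputable def sN (s : Fin d → ℕ) (n : ℕ) : ℕ := if h : n < d then s ⟨n, h⟩ else 1

noncomputable def pN (i : ℕ) (s : Fin d → ℕ) (n : ℕ) : ℝ :=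
  if h : n < d then pv i s ⟨n, h⟩ else 0

noncomputable def cd (i : ℕ) (s : Fin d → ℕ) (n : ℕ) : ℝ :=
  (sN s (n-1) : ℝ) * pN i s n - (sN s n : ℝ) * pN i s (n-1)

noncomputable def Av (i : ℕ) (s : Fin d → ℕ) (m : Fin (d+1)) (j : Fin d) : ℝ :=
  if (m : ℕ) = 0 then (if (j : ℕ) = 0 then -1 else 0)
  else if (m : ℕ) = d then (if (j : ℕ) = d - 1 then 1 else 0)
  else if (j : ℕ) = (m : ℕ) - 1 then (sN s (m : ℕ) : ℝ) / cd i s (m : ℕ)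
  else if (j : ℕ) = (m : ℕ) then -((sN s ((m : ℕ) - 1) : ℝ) / cd i s (m : ℕ))
  else 0

noncomputable def Gf (i : ℕ) (s : Fin d → ℕ) (n : ℕ) : ℝ :=
  if n = 0 then 0
  else if h : n - 1 < d then pv i s ⟨n-1, h⟩ / (s ⟨n-1, h⟩ : ℝ) else 1

noncomputable def lamv (i : ℕ) (s : Fin d → ℕ) (m : Fin (d+1)) : ℝ :=
  Gf i s ((m : ℕ) + 1) - Gf i s (m : ℕ)

section Facts

variable (i : ℕ) (s : Fin d → ℕ)

lemma spos (hpos : ∀ j, 0 < s j) (j : Fin d) : (0 : ℝ) < (s j : ℝ) := by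
  exact_mod_cast hpos j

lemma pv_lt_val (n : ℕ) (hnd : n < d) (hni : n < i) :
    pv i s ⟨n, hnd⟩ = (n : ℝ) + 1 := by
  rw [pv, if_pos (show n < i from hni)]

lemma pv_ge_val (n : ℕ) (hnd : n < d) (hni : i ≤ n) :
    pv i s ⟨n, hnd⟩ = (s ⟨n, hnd⟩ : ℝ) - 1 := by
  rw [pv, if_neg (show ¬ n < i by omega)]

lemma sN_val (n : ℕ) (hnd : n < d) : sN s n = s ⟨n, hnd⟩ := dif_pos hnd

lemma pv0 (hd : 0 < d) (hi1 : 1 ≤ i) : pv i s ⟨0, hd⟩ = 1 := by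
  rw [pv_lt_val i s 0 hd (by omega)]; norm_num

lemma s_last_sub_pv (hd : 0 < d) (hid : i ≤ d)
    (hconst : ∀ j : Fin d, (j : ℕ) < i → s j = i + 1) :
    (s ⟨d-1, by omega⟩ : ℝ) - pv i s ⟨d-1, by omega⟩ = 1 := by
  by_cases h : d - 1 < i
  · have hdi : i = d := by omega
    rw [pv_lt_val i s (d-1) (by omega) h, hconst ⟨d-1, by omega⟩ h]
    push_cast [Nat.cast_sub (by omega : 1 ≤ d), hdi]
    ring
  · rw [pv_ge_val i s (d-1) (by omega) (by omega)]; ring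

lemma s_step
    (hinc : ∀ j : Fin d, ∀ hj : (j : ℕ) + 1 < d, i ≤ (j : ℕ) + 1 →
      s j < s ⟨(j : ℕ) + 1, hj⟩ ∧ s ⟨(j : ℕ) + 1, hj⟩ ≤ 2 * s j)
    (n : ℕ) (hn1 : 1 ≤ n) (hnd : n < d) (hin : i ≤ n) :
    s ⟨n-1, by omega⟩ < s ⟨n, hnd⟩ := by
  have h := (hinc ⟨n-1, by omega⟩ (show (n-1)+1 < d by omega)
    (show i ≤ (n-1)+1 by omega)).1
  have he : n - 1 + 1 = n := by omega
  simp only [he] at h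
  exact h

lemma cd_unfold (n : ℕ) (hnd : n < d) (h1d : n - 1 < d) :
    cd i s n = (s ⟨n-1, h1d⟩ : ℝ) * pv i s ⟨n, hnd⟩ - (s ⟨n, hnd⟩ : ℝ) * pv i s ⟨n-1, h1d⟩ := by
  rw [cd, pN, pN, sN_val s n hnd, sN_val s (n-1) h1d, dif_pos hnd, dif_pos h1d]

lemma cd_lt (hconst : ∀ j : Fin d, (j : ℕ) < i → s j = i + 1)
    (n : ℕ) (hn1 : 1 ≤ n) (hnd : n < d) (hni : n < i) :
    cd i s n = (i : ℝ) + 1 := by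
  have h1d : n - 1 < d := by omega
  rw [cd_unfold i s n hnd h1d,
    hconst ⟨n-1, h1d⟩ (show n-1 < i by omega), hconst ⟨n, hnd⟩ (show n < i from hni),
    pv_lt_val i s n hnd hni, pv_lt_val i s (n-1) h1d (by omega)]
  push_cast [Nat.cast_sub hn1]
  ring

lemma cd_ge (hconst : ∀ j : Fin d, (j : ℕ) < i → s j = i + 1)
    (n : ℕ) (hn1 : 1 ≤ n) (hnd : n < d) (hni : i ≤ n) :
    cd i s n = (s ⟨n, hnd⟩ : ℝ) - (s ⟨n-1, by omega⟩ : ℝ) := by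
  have h1d : n - 1 < d := by omega
  rw [cd_unfold i s n hnd h1d, pv_ge_val i s n hnd hni]
  by_cases h : n - 1 < i
  · have hni' : i = n := by omega
    rw [pv_lt_val i s (n-1) h1d h, hconst ⟨n-1, h1d⟩ (show n-1 < i from h)]
    push_cast [Nat.cast_sub hn1, hni']
    ring
  · rw [pv_ge_val i s (n-1) h1d (by omega)]
    ring

lemma cd_pos (hconst : ∀ j : Fin d, (j : ℕ) < i → s j = i + 1)
    (hinc : ∀ j : Fin d, ∀ hj : (j : ℕ) + 1 < d, i ≤ (j : ℕ) + 1 →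
      s j < s ⟨(j : ℕ) + 1, hj⟩ ∧ s ⟨(j : ℕ) + 1, hj⟩ ≤ 2 * s j)
    (n : ℕ) (hn1 : 1 ≤ n) (hnd : n < d) : 0 < cd i s n := by
  by_cases hni : n < i
  · rw [cd_lt i s hconst n hn1 hnd hni]; positivity
  · rw [cd_ge i s hconst n hn1 hnd (by omega)]
    have h := s_step i s hinc n hn1 hnd (by omega)
    have h' : (s ⟨n-1, by omega⟩ : ℝ) < (s ⟨n, hnd⟩ : ℝ) := by exact_mod_cast h
    linarith

lemma Tmono (hpos : ∀ j, 0 < s j)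
    (hconst : ∀ j : Fin d, (j : ℕ) < i → s j = i + 1)
    (hinc : ∀ j : Fin d, ∀ hj : (j : ℕ) + 1 < d, i ≤ (j : ℕ) + 1 →
      s j < s ⟨(j : ℕ) + 1, hj⟩ ∧ s ⟨(j : ℕ) + 1, hj⟩ ≤ 2 * s j)
    (q : ℕ) (hq : q + 1 < d) :
    pv i s ⟨q, by omega⟩ * (s ⟨q+1, hq⟩ : ℝ) ≤ pv i s ⟨q+1, hq⟩ * (s ⟨q, by omega⟩ : ℝ) := by
  have hqd : q < d := by omega
  by_cases h2 : q + 1 < i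
  · have h1 : q < i := by omega
    rw [pv_lt_val i s q hqd h1, pv_lt_val i s (q+1) hq h2,
      hconst ⟨q, hqd⟩ (show q < i from h1), hconst ⟨q+1, hq⟩ (show q+1 < i from h2)]
    push_cast
    nlinarith [Nat.cast_nonneg (α := ℝ) q, Nat.cast_nonneg (α := ℝ) i]
  · by_cases h1 : q < i
    · have hiq : i = q + 1 := by omega
      have hst := s_step i s hinc (q+1) (by omega) hq (by omega)
      have e0 : s ⟨q+1-1, by omega⟩ = s ⟨q, hqd⟩ := rfl
      rw [e0, hconst ⟨q, hqd⟩ (show q < i from h1)] at hst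
      have hs2 : (i : ℝ) + 1 < (s ⟨q+1, hq⟩ : ℝ) := by exact_mod_cast hst
      rw [pv_lt_val i s q hqd h1, pv_ge_val i s (q+1) hq (by omega),
        hconst ⟨q, hqd⟩ (show q < i from h1)]
      have hiq' : (i:ℝ) = (q:ℝ)+1 := by exact_mod_cast hiq
      push_cast
      nlinarith [Nat.cast_nonneg (α := ℝ) q, hs2, hiq']
    · have hst := s_step i s hinc (q+1) (by omega) hq (by omega)
      have e0 : s ⟨q+1-1, by omega⟩ = s ⟨q, hqd⟩ := rfl
      rw [e0] at hst
      have hst' : (s ⟨q, hqd⟩ : ℝ) ≤ (s ⟨q+1, hq⟩ : ℝ) := by exact_mod_cast le_of_lt hst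
      rw [pv_ge_val i s q hqd (by omega), pv_ge_val i s (q+1) hq (by omega)]
      have hp1 := spos s hpos ⟨q, hqd⟩
      have hp2 := spos s hpos ⟨q+1, hq⟩
      nlinarith

end Facts
end Stmt7Aux

namespace Stmt7Aux

section Facts2

variable {d : ℕ} (i : ℕ) (s : Fin d → ℕ)

lemma Gf_succ_lt (n : ℕ) (hnd : n < d) :
    Gf i s (n+1) = pv i s ⟨n, hnd⟩ / (s ⟨n, hnd⟩ : ℝ) := by
  rw [Gf, if_neg (Nat.succ_ne_zero n), dif_pos (show n+1-1 < d from hnd)]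
  norm_num

lemma Gf_succ_ge (n : ℕ) (hnd : ¬ n < d) : Gf i s (n+1) = 1 := by
  rw [Gf, if_neg (Nat.succ_ne_zero n), dif_neg (show ¬ n+1-1 < d from hnd)]

lemma Gf_zero : Gf i s 0 = 0 := by rw [Gf, if_pos rfl]

lemma Gmono (hd : 0 < d) (hi1 : 1 ≤ i) (hid : i ≤ d) (hpos : ∀ j, 0 < s j)
    (hconst : ∀ j : Fin d, (j : ℕ) < i → s j = i + 1)
    (hinc : ∀ j : Fin d, ∀ hj : (j : ℕ) + 1 < d, i ≤ (j : ℕ) + 1 →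
      s j < s ⟨(j : ℕ) + 1, hj⟩ ∧ s ⟨(j : ℕ) + 1, hj⟩ ≤ 2 * s j)
    (n : ℕ) : Gf i s n ≤ Gf i s (n+1) := by
  rcases n with _ | k
  · rw [Gf_zero, Gf_succ_lt i s 0 hd, pv0 i s hd hi1]
    positivity
  · by_cases hk1 : k + 1 < d
    · have hkd : k < d := by omega
      rw [Gf_succ_lt i s k hkd, Gf_succ_lt i s (k+1) hk1,
        div_le_div_iff₀ (spos s hpos _) (spos s hpos _)]
      exact Tmono i s hpos hconst hinc k hk1
    · by_cases hkd : k < d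
      · have hdk : k = d - 1 := by omega
        rw [Gf_succ_lt i s k hkd, Gf_succ_ge i s (k+1) hk1, div_le_one (spos s hpos _)]
        have h := s_last_sub_pv i s hd hid hconst
        subst hdk
        linarith [h]
      · rw [Gf_succ_ge i s k hkd, Gf_succ_ge i s (k+1) (by omega)]

lemma lam_nonneg (hd : 0 < d) (hi1 : 1 ≤ i) (hid : i ≤ d) (hpos : ∀ j, 0 < s j)
    (hconst : ∀ j : Fin d, (j : ℕ) < i → s j = i + 1)
    (hinc : ∀ j : Fin d, ∀ hj : (j : ℕ) + 1 < d, i ≤ (j : ℕ) + 1 →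
      s j < s ⟨(j : ℕ) + 1, hj⟩ ∧ s ⟨(j : ℕ) + 1, hj⟩ ≤ 2 * s j)
    (m : Fin (d+1)) : 0 ≤ lamv i s m :=
  sub_nonneg.mpr (Gmono i s hd hi1 hid hpos hconst hinc (m : ℕ))

lemma lam_sum : ∑ r : Fin (d+1), lamv i s r = 1 := by
  calc ∑ r : Fin (d+1), lamv i s r
      = ∑ nn ∈ Finset.range (d+1), (Gf i s (nn+1) - Gf i s nn) :=
        Fin.sum_univ_eq_sum_range (fun nn => Gf i s (nn+1) - Gf i s nn) (d+1)
    _ = Gf i s (d+1) - Gf i s 0 := Finset.sum_range_sub (Gf i s) (d+1)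
    _ = 1 := by rw [Gf_zero, Gf_succ_ge i s d (lt_irrefl d)]; ring

lemma wsum (hpos : ∀ j, 0 < s j) (j : Fin d) :
    ∑ r : Fin (d+1), lamv i s r * wv s r j = pv i s j := by
  have h1 : ∑ r : Fin (d+1), lamv i s r * wv s r j
      = ∑ nn ∈ Finset.range (d+1),
          ((Gf i s (nn+1) - Gf i s nn) * (if nn ≤ (j:ℕ) then (s j : ℝ) else 0)) :=
    Fin.sum_univ_eq_sum_range
      (fun nn => (Gf i s (nn+1) - Gf i s nn) * (if nn ≤ (j:ℕ) then (s j : ℝ) else 0)) (d+1)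
  have h2 : ∑ nn ∈ Finset.range ((j:ℕ)+1),
        ((Gf i s (nn+1) - Gf i s nn) * (if nn ≤ (j:ℕ) then (s j : ℝ) else 0))
      = ∑ nn ∈ Finset.range (d+1),
        ((Gf i s (nn+1) - Gf i s nn) * (if nn ≤ (j:ℕ) then (s j : ℝ) else 0)) := by
    refine Finset.sum_subset (Finset.range_subset_range.mpr (by omega)) ?_
    intro x _ hx
    rw [if_neg (by simp at hx; omega), mul_zero]
  rw [h1, ← h2, Finset.sum_congr rfl
    (fun nn hnn => by rw [if_pos (by simp at hnn; omega)]),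
    ← Finset.sum_mul, Finset.sum_range_sub (Gf i s) ((j:ℕ)+1), Gf_zero,
    Gf_succ_lt i s (j:ℕ) j.isLt, sub_zero]
  have : (⟨(j:ℕ), j.isLt⟩ : Fin d) = j := rfl
  rw [this, div_mul_cancel₀ _ (ne_of_gt (spos s hpos j))]

lemma bary (hd : 0 < d) (hpos : ∀ j, 0 < s j) (j : Fin d) :
    ∑ r : Fin (d+1), lamv i s r * Vv i s r j = 0 := by
  have h : ∀ r : Fin (d+1), lamv i s r * Vv i s r j
      = lamv i s r * wv s r j - lamv i s r * pv i s j := fun r => by rw [Vv]; ring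
  rw [Finset.sum_congr rfl (fun r _ => h r), Finset.sum_sub_distrib, wsum i s hpos,
    ← Finset.sum_mul, lam_sum i s, one_mul, sub_self]

lemma span (hpos : ∀ j, 0 < s j) (u : Fin d → ℝ)
    (hu : ∀ r, ∑ j', Vv i s r j' * u j' = 0) : u = 0 := by
  funext j
  have r1lt : (j:ℕ) < d + 1 := by omega
  have r2lt : (j:ℕ)+1 < d + 1 := by omega
  have h12 : ∑ j', (Vv i s ⟨(j:ℕ), r1lt⟩ j' - Vv i s ⟨(j:ℕ)+1, r2lt⟩ j') * u j' = 0 := by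
    rw [Finset.sum_congr rfl (fun j' _ => sub_mul _ _ (u j')), Finset.sum_sub_distrib,
      hu _, hu _, sub_zero]
  have hdiff : ∀ j' : Fin d, (Vv i s ⟨(j:ℕ), r1lt⟩ j' - Vv i s ⟨(j:ℕ)+1, r2lt⟩ j') * u j'
      = if (j':ℕ) = (j:ℕ) then (s j':ℝ) * u j' else 0 := by
    intro j'
    have e1 : Vv i s ⟨(j:ℕ), r1lt⟩ j'
        = (if (j:ℕ) ≤ (j':ℕ) then (s j':ℝ) else 0) - pv i s j' := rfl
    have e2 : Vv i s ⟨(j:ℕ)+1, r2lt⟩ j'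
        = (if (j:ℕ)+1 ≤ (j':ℕ) then (s j':ℝ) else 0) - pv i s j' := rfl
    rw [e1, e2]
    by_cases c1 : (j:ℕ) ≤ (j':ℕ)
    · by_cases c2 : (j:ℕ)+1 ≤ (j':ℕ)
      · rw [if_pos c1, if_pos c2, if_neg (show ¬(j':ℕ) = (j:ℕ) by omega)]; ring
      · rw [if_pos c1, if_neg c2, if_pos (show (j':ℕ) = (j:ℕ) by omega)]; ring
    · rw [if_neg c1, if_neg (show ¬(j:ℕ)+1 ≤ (j':ℕ) by omega),
        if_neg (show ¬(j':ℕ) = (j:ℕ) by omega)]; ring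
  rw [Finset.sum_congr rfl (fun j' _ => hdiff j'),
    sum_single' (j:ℕ) j.isLt (fun j' => (s j':ℝ) * u j')] at h12
  have hs := spos s hpos j
  have hj : (⟨(j:ℕ), j.isLt⟩ : Fin d) = j := rfl
  rw [hj] at h12
  have : u j = 0 := by
    rcases mul_eq_zero.mp h12 with h | h
    · exact absurd h (ne_of_gt hs)
    · exact h
  simpa using this

lemma wv_mem (hd : 0 < d) (hpos : ∀ j, 0 < s j) (m : Fin (d+1)) :
    wv s m ∈ lectureHall d s := by
  have hv : ∀ j' : Fin d, wv s m j' / (s j' : ℝ) = if (m:ℕ) ≤ (j':ℕ) then 1 else 0 := by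
    intro j'; rw [wv]; split_ifs with h
    · exact div_self (ne_of_gt (spos s hpos j'))
    · exact zero_div _
  refine ⟨fun h => ?_, fun jj hjj => ?_, fun h => ?_⟩
  · rw [hv ⟨0, h⟩]; split_ifs <;> norm_num
  · rw [hv jj, hv ⟨(jj:ℕ)+1, hjj⟩]
    have e : ((⟨(jj:ℕ)+1, hjj⟩ : Fin d) : ℕ) = (jj:ℕ)+1 := rfl
    rw [e]
    split_ifs with h1 h2 h2
    · exact le_refl _
    · exact absurd (by omega : (m:ℕ) ≤ (jj:ℕ)+1) h2
    · norm_num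
    · exact le_refl _
  · rw [hv _]; split_ifs <;> norm_num

end Facts2
end Stmt7Aux

namespace Stmt7Aux

section Facts3

variable {d : ℕ} (i : ℕ) (s : Fin d → ℕ)

lemma sum_mul_Av_zero (hd : 0 < d) (x : Fin d → ℝ) (m : Fin (d+1)) (hm0 : (m:ℕ) = 0) :
    ∑ j, x j * Av i s m j = -(x ⟨0, hd⟩) := by
  have key : ∀ j : Fin d, x j * Av i s m j = (if (j:ℕ) = 0 then x j * (-1) else 0) := by
    intro j
    rw [Av, if_pos hm0]
    by_cases h : (j:ℕ) = 0
    · rw [if_pos h, if_pos h]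
    · rw [if_neg h, if_neg h, mul_zero]
  rw [Finset.sum_congr rfl (fun j _ => key j), sum_single' 0 hd (fun j => x j * (-1))]
  ring

lemma sum_mul_Av_last (hd : 0 < d) (x : Fin d → ℝ) (m : Fin (d+1)) (hmd : (m:ℕ) = d) :
    ∑ j, x j * Av i s m j = x ⟨d-1, by omega⟩ := by
  have key : ∀ j : Fin d, x j * Av i s m j = (if (j:ℕ) = d-1 then x j * 1 else 0) := by
    intro j
    rw [Av, if_neg (by omega), if_pos hmd]
    by_cases h : (j:ℕ) = d-1
    · rw [if_pos h, if_pos h]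
    · rw [if_neg h, if_neg h, mul_zero]
  rw [Finset.sum_congr rfl (fun j _ => key j), sum_single' (d-1) (by omega) (fun j => x j * 1)]
  ring

lemma sum_mul_Av_mid (x : Fin d → ℝ) (m : Fin (d+1)) (hm0 : (m:ℕ) ≠ 0) (hmd : (m:ℕ) ≠ d) :
    ∑ j, x j * Av i s m j
      = x ⟨(m:ℕ)-1, by omega⟩ * ((sN s (m:ℕ) : ℝ) / cd i s (m:ℕ))
        + x ⟨(m:ℕ), by omega⟩ * (-((sN s ((m:ℕ)-1) : ℝ) / cd i s (m:ℕ))) := by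
  have key : ∀ j : Fin d, x j * Av i s m j
      = (if (j:ℕ) = (m:ℕ)-1 then x j * ((sN s (m:ℕ) : ℝ) / cd i s (m:ℕ))
        else if (j:ℕ) = (m:ℕ) then x j * (-((sN s ((m:ℕ)-1) : ℝ) / cd i s (m:ℕ)))
        else 0) := by
    intro j
    rw [Av, if_neg hm0, if_neg hmd]
    by_cases h1 : (j:ℕ) = (m:ℕ)-1
    · rw [if_pos h1, if_pos h1]
    · rw [if_neg h1, if_neg h1]
      by_cases h2 : (j:ℕ) = (m:ℕ)
      · rw [if_pos h2, if_pos h2]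
      · rw [if_neg h2, if_neg h2, mul_zero]
  rw [Finset.sum_congr rfl (fun j _ => key j),
    sum_two' ((m:ℕ)-1) (m:ℕ) (by omega) (by omega) (by omega) _ _]

lemma dual_ineq (hd : 0 < d) (hi1 : 1 ≤ i) (hid : i ≤ d) (hpos : ∀ j, 0 < s j)
    (hconst : ∀ j : Fin d, (j : ℕ) < i → s j = i + 1)
    (hinc : ∀ j : Fin d, ∀ hj : (j : ℕ) + 1 < d, i ≤ (j : ℕ) + 1 →
      s j < s ⟨(j : ℕ) + 1, hj⟩ ∧ s ⟨(j : ℕ) + 1, hj⟩ ≤ 2 * s j)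
    (m : Fin (d+1)) (x : Fin d → ℝ) (hx : x ∈ lectureHall d s) :
    ∑ j, (x j - pv i s j) * Av i s m j ≤ 1 := by
  obtain ⟨hx0, hxm, hx1⟩ := hx
  by_cases hm0 : (m:ℕ) = 0
  · rw [sum_mul_Av_zero i s hd _ m hm0]
    have h0 := hx0 hd
    rw [le_div_iff₀ (spos s hpos ⟨0, hd⟩)] at h0
    rw [pv0 i s hd hi1]
    nlinarith [h0]
  · by_cases hmd : (m:ℕ) = d
    · rw [sum_mul_Av_last i s hd _ m hmd]
      have h1 := hx1 hd
      rw [div_le_one (spos s hpos _)] at h1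
      have h2 := s_last_sub_pv i s hd hid hconst
      have e : (⟨d-1, Nat.sub_lt hd Nat.one_pos⟩ : Fin d) = ⟨d-1, by omega⟩ := rfl
      rw [e] at h1
      linarith
    · rw [sum_mul_Av_mid i s _ m hm0 hmd]
      have hn1 : 1 ≤ (m:ℕ) := by omega
      have hnd : (m:ℕ) < d := by omega
      have h1d : (m:ℕ) - 1 < d := by omega
      have hratio := hxm ⟨(m:ℕ)-1, h1d⟩ (show ((m:ℕ)-1)+1 < d by omega)
      simp only [Nat.sub_add_cancel hn1] at hratio
      rw [div_le_div_iff₀ (spos s hpos _) (spos s hpos _)] at hratio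
      have hcpos := cd_pos i s hconst hinc (m:ℕ) hn1 hnd
      have hcd := cd_unfold i s (m:ℕ) hnd h1d
      rw [sN_val s (m:ℕ) hnd, sN_val s ((m:ℕ)-1) h1d]
      have expand :
          (x ⟨(m:ℕ)-1, h1d⟩ - pv i s ⟨(m:ℕ)-1, h1d⟩) * ((s ⟨(m:ℕ), hnd⟩ : ℝ) / cd i s (m:ℕ))
          + (x ⟨(m:ℕ), hnd⟩ - pv i s ⟨(m:ℕ), hnd⟩) * (-((s ⟨(m:ℕ)-1, h1d⟩ : ℝ) / cd i s (m:ℕ)))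
          = ((x ⟨(m:ℕ)-1, h1d⟩ - pv i s ⟨(m:ℕ)-1, h1d⟩) * (s ⟨(m:ℕ), hnd⟩ : ℝ)
            - (x ⟨(m:ℕ), hnd⟩ - pv i s ⟨(m:ℕ), hnd⟩) * (s ⟨(m:ℕ)-1, h1d⟩ : ℝ)) / cd i s (m:ℕ) := by
        ring
      have e1 : (⟨(m:ℕ)-1, by omega⟩ : Fin d) = ⟨(m:ℕ)-1, h1d⟩ := rfl
      have e2 : (⟨(m:ℕ), by omega⟩ : Fin d) = ⟨(m:ℕ), hnd⟩ := rfl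
      rw [e1, e2, expand, div_le_one hcpos, hcd]
      nlinarith [hratio]

lemma pair_eq (hd : 0 < d) (hi1 : 1 ≤ i) (hid : i ≤ d) (hpos : ∀ j, 0 < s j)
    (hconst : ∀ j : Fin d, (j : ℕ) < i → s j = i + 1)
    (hinc : ∀ j : Fin d, ∀ hj : (j : ℕ) + 1 < d, i ≤ (j : ℕ) + 1 →
      s j < s ⟨(j : ℕ) + 1, hj⟩ ∧ s ⟨(j : ℕ) + 1, hj⟩ ≤ 2 * s j)
    (m r : Fin (d+1)) (hmr : m ≠ r) :
    ∑ j, Vv i s r j * Av i s m j = 1 := by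
  have hmr' : (m:ℕ) ≠ (r:ℕ) := fun h => hmr (Fin.ext h)
  by_cases hm0 : (m:ℕ) = 0
  · rw [sum_mul_Av_zero i s hd _ m hm0]
    have e : Vv i s r ⟨0, hd⟩ = (if (r:ℕ) ≤ 0 then ((s ⟨0,hd⟩ : ℕ) : ℝ) else 0) - pv i s ⟨0, hd⟩ := rfl
    rw [e, if_neg (by omega), pv0 i s hd hi1]
    ring
  · by_cases hmd : (m:ℕ) = d
    · rw [sum_mul_Av_last i s hd _ m hmd]
      have hrd : (r:ℕ) ≤ d - 1 := by have := r.isLt; omega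
      have e : Vv i s r ⟨d-1, by omega⟩
          = (if (r:ℕ) ≤ d-1 then ((s ⟨d-1, by omega⟩ : ℕ) : ℝ) else 0) - pv i s ⟨d-1, by omega⟩ := rfl
      rw [e, if_pos hrd]
      have h2 := s_last_sub_pv i s hd hid hconst
      linarith
    · rw [sum_mul_Av_mid i s _ m hm0 hmd]
      have hn1 : 1 ≤ (m:ℕ) := by omega
      have hnd : (m:ℕ) < d := by omega
      have h1d : (m:ℕ) - 1 < d := by omega
      have hcpos := cd_pos i s hconst hinc (m:ℕ) hn1 hnd
      have hcd := cd_unfold i s (m:ℕ) hnd h1d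
      rw [sN_val s (m:ℕ) hnd, sN_val s ((m:ℕ)-1) h1d]
      have e1 : (⟨(m:ℕ)-1, by omega⟩ : Fin d) = ⟨(m:ℕ)-1, h1d⟩ := rfl
      have e2 : (⟨(m:ℕ), by omega⟩ : Fin d) = ⟨(m:ℕ), hnd⟩ := rfl
      rw [e1, e2]
      have ev1 : Vv i s r ⟨(m:ℕ)-1, h1d⟩
          = (if (r:ℕ) ≤ (m:ℕ)-1 then ((s ⟨(m:ℕ)-1, h1d⟩ : ℕ) : ℝ) else 0) - pv i s ⟨(m:ℕ)-1, h1d⟩ := rfl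
      have ev2 : Vv i s r ⟨(m:ℕ), hnd⟩
          = (if (r:ℕ) ≤ (m:ℕ) then ((s ⟨(m:ℕ), hnd⟩ : ℕ) : ℝ) else 0) - pv i s ⟨(m:ℕ), hnd⟩ := rfl
      rw [ev1, ev2]
      set S1 := ((s ⟨(m:ℕ)-1, h1d⟩ : ℕ) : ℝ) with hS1
      set S2 := ((s ⟨(m:ℕ), hnd⟩ : ℕ) : ℝ) with hS2
      set p1 := pv i s ⟨(m:ℕ)-1, h1d⟩ with hp1
      set p2 := pv i s ⟨(m:ℕ), hnd⟩ with hp2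
      by_cases hr : (r:ℕ) ≤ (m:ℕ)-1
      · rw [if_pos hr, if_pos (by omega)]
        have expand : (S1 - p1) * (S2 / cd i s (m:ℕ)) + (S2 - p2) * (-(S1 / cd i s (m:ℕ)))
            = ((S1 - p1) * S2 - (S2 - p2) * S1) / cd i s (m:ℕ) := by ring
        rw [expand, show (S1 - p1) * S2 - (S2 - p2) * S1 = cd i s (m:ℕ) by rw [hcd]; ring]
        exact div_self (ne_of_gt hcpos)
      · rw [if_neg hr, if_neg (by omega)]
        have expand : (0 - p1) * (S2 / cd i s (m:ℕ)) + (0 - p2) * (-(S1 / cd i s (m:ℕ)))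
            = ((0 - p1) * S2 - (0 - p2) * S1) / cd i s (m:ℕ) := by ring
        rw [expand, show (0 - p1) * S2 - (0 - p2) * S1 = cd i s (m:ℕ) by rw [hcd]; ring]
        exact div_self (ne_of_gt hcpos)

lemma pair_diag (hd : 0 < d) (hi1 : 1 ≤ i) (hid : i ≤ d) (hpos : ∀ j, 0 < s j)
    (hconst : ∀ j : Fin d, (j : ℕ) < i → s j = i + 1)
    (hinc : ∀ j : Fin d, ∀ hj : (j : ℕ) + 1 < d, i ≤ (j : ℕ) + 1 →
      s j < s ⟨(j : ℕ) + 1, hj⟩ ∧ s ⟨(j : ℕ) + 1, hj⟩ ≤ 2 * s j)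
    (m : Fin (d+1)) (hm0 : (m:ℕ) ≠ 0) (hmd : (m:ℕ) ≠ d) (hnd : (m:ℕ) < d)
    (h1d : (m:ℕ) - 1 < d) :
    ∑ j, Vv i s m j * Av i s m j
      = 1 - ((s ⟨(m:ℕ)-1, h1d⟩ : ℝ) * (s ⟨(m:ℕ), hnd⟩ : ℝ)) / cd i s (m:ℕ) := by
  have hn1 : 1 ≤ (m:ℕ) := by omega
  rw [sum_mul_Av_mid i s _ m hm0 hmd]
  have hcpos := cd_pos i s hconst hinc (m:ℕ) hn1 hnd
  have hcd := cd_unfold i s (m:ℕ) hnd h1d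
  rw [sN_val s (m:ℕ) hnd, sN_val s ((m:ℕ)-1) h1d]
  have e1 : (⟨(m:ℕ)-1, by omega⟩ : Fin d) = ⟨(m:ℕ)-1, h1d⟩ := rfl
  have e2 : (⟨(m:ℕ), by omega⟩ : Fin d) = ⟨(m:ℕ), hnd⟩ := rfl
  rw [e1, e2]
  have ev1 : Vv i s m ⟨(m:ℕ)-1, h1d⟩
      = (if (m:ℕ) ≤ (m:ℕ)-1 then ((s ⟨(m:ℕ)-1, h1d⟩ : ℕ) : ℝ) else 0) - pv i s ⟨(m:ℕ)-1, h1d⟩ := rfl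
  have ev2 : Vv i s m ⟨(m:ℕ), hnd⟩
      = (if (m:ℕ) ≤ (m:ℕ) then ((s ⟨(m:ℕ), hnd⟩ : ℕ) : ℝ) else 0) - pv i s ⟨(m:ℕ), hnd⟩ := rfl
  rw [ev1, ev2, if_neg (by omega), if_pos (le_refl _)]
  set S1 := ((s ⟨(m:ℕ)-1, h1d⟩ : ℕ) : ℝ) with hS1
  set S2 := ((s ⟨(m:ℕ), hnd⟩ : ℕ) : ℝ) with hS2
  set p1 := pv i s ⟨(m:ℕ)-1, h1d⟩ with hp1
  set p2 := pv i s ⟨(m:ℕ), hnd⟩ with hp2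
  have expand : (0 - p1) * (S2 / cd i s (m:ℕ)) + (S2 - p2) * (-(S1 / cd i s (m:ℕ)))
      = ((0 - p1) * S2 - (S2 - p2) * S1) / cd i s (m:ℕ) := by ring
  have h2 : 1 - S1 * S2 / cd i s (m:ℕ) = (cd i s (m:ℕ) - S1 * S2) / cd i s (m:ℕ) := by
    field_simp
  rw [expand, h2, show (0 - p1) * S2 - (S2 - p2) * S1 = cd i s (m:ℕ) - S1 * S2 by
    rw [hcd]; ring]

end Facts3
end Stmt7Aux


namespace Stmt7Aux

section Facts4

variable {d : ℕ} (i : ℕ) (s : Fin d → ℕ)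

lemma Vv_int (m : Fin (d+1)) (j : Fin d) : ∃ z : ℤ, Vv i s m j = (z : ℝ) := by
  rw [Vv, wv, pv]
  by_cases h1 : (m:ℕ) ≤ (j:ℕ) <;> by_cases h2 : (j:ℕ) < i
  · exact ⟨(s j : ℤ) - ((j:ℕ) : ℤ) - 1, by rw [if_pos h1, if_pos h2]; push_cast; ring⟩
  · exact ⟨1, by rw [if_pos h1, if_neg h2]; push_cast; ring⟩
  · exact ⟨-((j:ℕ) : ℤ) - 1, by rw [if_neg h1, if_pos h2]; push_cast; ring⟩
  · exact ⟨-(s j : ℤ) + 1, by rw [if_neg h1, if_neg h2]; push_cast; ring⟩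

lemma Av_int (hd : 0 < d) (hi1 : 1 ≤ i) (hid : i ≤ d) (hpos : ∀ j, 0 < s j)
    (hconst : ∀ j : Fin d, (j : ℕ) < i → s j = i + 1)
    (hinc : ∀ j : Fin d, ∀ hj : (j : ℕ) + 1 < d, i ≤ (j : ℕ) + 1 →
      s j < s ⟨(j : ℕ) + 1, hj⟩ ∧ s ⟨(j : ℕ) + 1, hj⟩ ≤ 2 * s j)
    (hdvd : ∀ j : Fin d, ∀ hj : (j : ℕ) + 1 < d, i ≤ (j : ℕ) + 1 →
      (s ⟨(j : ℕ) + 1, hj⟩ - s j) ∣ s j ∧ (s ⟨(j : ℕ) + 1, hj⟩ - s j) ∣ s ⟨(j : ℕ) + 1, hj⟩)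
    (m : Fin (d+1)) (j : Fin d) : ∃ z : ℤ, Av i s m j = (z : ℝ) := by
  by_cases hm0 : (m:ℕ) = 0
  · rw [Av, if_pos hm0]
    by_cases h : (j:ℕ) = 0
    · exact ⟨-1, by rw [if_pos h]; norm_num⟩
    · exact ⟨0, by rw [if_neg h]; norm_num⟩
  · by_cases hmd : (m:ℕ) = d
    · rw [Av, if_neg hm0, if_pos hmd]
      by_cases h : (j:ℕ) = d-1
      · exact ⟨1, by rw [if_pos h]; norm_num⟩
      · exact ⟨0, by rw [if_neg h]; norm_num⟩
    · have hn1 : 1 ≤ (m:ℕ) := by omega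
      have hnd : (m:ℕ) < d := by have := m.isLt; omega
      have h1d : (m:ℕ) - 1 < d := by omega
      rw [Av, if_neg hm0, if_neg hmd, sN_val s (m:ℕ) hnd, sN_val s ((m:ℕ)-1) h1d]
      by_cases hni : (m:ℕ) < i
      · have hcd := cd_lt i s hconst (m:ℕ) hn1 hnd hni
        have e1 : s ⟨(m:ℕ)-1, h1d⟩ = i+1 := hconst _ (show (m:ℕ)-1 < i by omega)
        have e2 : s ⟨(m:ℕ), hnd⟩ = i+1 := hconst _ (show (m:ℕ) < i from hni)
        rw [hcd, e1, e2]
        by_cases h1 : (j:ℕ) = (m:ℕ)-1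
        · refine ⟨1, ?_⟩
          rw [if_pos h1]
          push_cast
          rw [div_self (by positivity : (i:ℝ)+1 ≠ 0)]
        · rw [if_neg h1]
          by_cases h2 : (j:ℕ) = (m:ℕ)
          · refine ⟨-1, ?_⟩
            rw [if_pos h2]
            push_cast
            rw [div_self (by positivity : (i:ℝ)+1 ≠ 0)]
          · exact ⟨0, by rw [if_neg h2]; norm_num⟩
      · have hin : i ≤ (m:ℕ) := by omega
        have hdv := hdvd ⟨(m:ℕ)-1, h1d⟩ (show ((m:ℕ)-1)+1 < d by omega)
          (show i ≤ ((m:ℕ)-1)+1 by omega)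
        simp only [Nat.sub_add_cancel hn1] at hdv
        have hlt : s ⟨(m:ℕ)-1, h1d⟩ < s ⟨(m:ℕ), hnd⟩ :=
          s_step i s hinc (m:ℕ) hn1 hnd hin
        have hdv1 : (s ⟨(m:ℕ), hnd⟩ - s ⟨(m:ℕ)-1, h1d⟩) ∣ s ⟨(m:ℕ)-1, h1d⟩ := hdv.1
        have hdv2 : (s ⟨(m:ℕ), hnd⟩ - s ⟨(m:ℕ)-1, h1d⟩) ∣ s ⟨(m:ℕ), hnd⟩ := hdv.2
        have hcd : cd i s (m:ℕ)
            = (s ⟨(m:ℕ), hnd⟩ : ℝ) - (s ⟨(m:ℕ)-1, h1d⟩ : ℝ) :=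
          cd_ge i s hconst (m:ℕ) hn1 hnd hin
        have hkpos : 0 < s ⟨(m:ℕ), hnd⟩ - s ⟨(m:ℕ)-1, h1d⟩ := by omega
        have hkr : cd i s (m:ℕ) = ((s ⟨(m:ℕ), hnd⟩ - s ⟨(m:ℕ)-1, h1d⟩ : ℕ) : ℝ) := by
          rw [hcd]
          push_cast [Nat.cast_sub (le_of_lt hlt)]
          ring
        have hkne : ((s ⟨(m:ℕ), hnd⟩ - s ⟨(m:ℕ)-1, h1d⟩ : ℕ) : ℝ) ≠ 0 := by
          exact_mod_cast Nat.pos_iff_ne_zero.mp hkpos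
        by_cases h1 : (j:ℕ) = (m:ℕ)-1
        · obtain ⟨a, ha⟩ := hdv2
          refine ⟨a, ?_⟩
          have hareal : ((s ⟨(m:ℕ), hnd⟩ : ℕ) : ℝ)
              = ((s ⟨(m:ℕ), hnd⟩ - s ⟨(m:ℕ)-1, h1d⟩ : ℕ) : ℝ) * (a:ℝ) := by
            exact_mod_cast ha
          rw [if_pos h1, hkr, hareal, mul_div_cancel_left₀ _ hkne]
          norm_cast
        · rw [if_neg h1]
          by_cases h2 : (j:ℕ) = (m:ℕ)
          · obtain ⟨a, ha⟩ := hdv1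
            refine ⟨-a, ?_⟩
            have hareal : ((s ⟨(m:ℕ)-1, h1d⟩ : ℕ) : ℝ)
                = ((s ⟨(m:ℕ), hnd⟩ - s ⟨(m:ℕ)-1, h1d⟩ : ℕ) : ℝ) * (a:ℝ) := by
              exact_mod_cast ha
            rw [if_pos h2, hkr, hareal, mul_div_cancel_left₀ _ hkne]
            push_cast
            ring
          · exact ⟨0, by rw [if_neg h2]; norm_num⟩

end Facts4

lemma convex_dualPolytope {d : ℕ} (Q : Set (Fin d → ℝ)) : Convex ℝ (dualPolytope Q) := by
  intro y1 h1 y2 h2 a b ha hb hab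
  intro x hx
  have e : ∑ jj, x jj * (a • y1 + b • y2) jj
      = a * (∑ jj, x jj * y1 jj) + b * (∑ jj, x jj * y2 jj) := by
    rw [Finset.mul_sum, Finset.mul_sum, ← Finset.sum_add_distrib]
    refine Finset.sum_congr rfl fun jj _ => ?_
    simp only [Pi.add_apply, Pi.smul_apply, smul_eq_mul]
    ring
  rw [e]
  nlinarith [h1 x hx, h2 x hx]

lemma convex_halfspace_nu {d : ℕ} (c : Fin d → ℝ) (K B : ℝ) :
    Convex ℝ {y : Fin d → ℝ | K * (1 - ∑ j, c j * y j) ≤ B} := by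
  intro y1 h1 y2 h2 a b ha hb hab
  simp only [Set.mem_setOf_eq] at h1 h2 ⊢
  have e : ∑ jj, c jj * (a • y1 + b • y2) jj
      = a * (∑ jj, c jj * y1 jj) + b * (∑ jj, c jj * y2 jj) := by
    rw [Finset.mul_sum, Finset.mul_sum, ← Finset.sum_add_distrib]
    refine Finset.sum_congr rfl fun jj _ => ?_
    simp only [Pi.add_apply, Pi.smul_apply, smul_eq_mul]
    ring
  rw [e]
  have hb' : b = 1 - a := by linarith
  subst hb'
  have h1' := mul_le_mul_of_nonneg_left h1 ha
  have h2' := mul_le_mul_of_nonneg_left h2 hb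
  nlinarith [h1', h2']

end Stmt7Aux


-- MAIN THEOREM material appended separately
/-- for `s` with `s_1 = ⋯ = s_i = i + 1` and
`s_j < s_{j+1} ≤ 2 s_j` for `i ≤ j ≤ d - 1`, and `Q = P_d^(s) - p` with
`p = (1, …, i, s_{i+1} - 1, …, s_d - 1)`, the dual `Q^∨` is a lattice polytope
iff `k_j = s_{j+1} - s_j` divides `s_j` and `s_{j+1}` for all `i ≤ j ≤ d-1`. -/
theorem stmt_7 (d i : ℕ) (hd : 0 < d) (hi1 : 1 ≤ i) (hid : i ≤ d)
    (s : Fin d → ℕ) (hpos : ∀ j, 0 < s j)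
    (hconst : ∀ j : Fin d, (j : ℕ) < i → s j = i + 1)
    (hinc : ∀ j : Fin d, ∀ hj : (j : ℕ) + 1 < d, i ≤ (j : ℕ) + 1 →
      s j < s ⟨(j : ℕ) + 1, hj⟩ ∧ s ⟨(j : ℕ) + 1, hj⟩ ≤ 2 * s j) :
    (dualPolytope ((fun x (j : Fin d) =>
          x j - (if (j : ℕ) < i then ((j : ℕ) : ℝ) + 1 else (s j : ℝ) - 1)) ''
            lectureHall d s) =
        convexHull ℝ
          (dualPolytope ((fun x (j : Fin d) =>
              x j - (if (j : ℕ) < i then ((j : ℕ) : ℝ) + 1 else (s j : ℝ) - 1)) ''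
                lectureHall d s) ∩ latticePoints d)) ↔
      ∀ j : Fin d, ∀ hj : (j : ℕ) + 1 < d, i ≤ (j : ℕ) + 1 →
        (s ⟨(j : ℕ) + 1, hj⟩ - s j) ∣ s j ∧
        (s ⟨(j : ℕ) + 1, hj⟩ - s j) ∣ s ⟨(j : ℕ) + 1, hj⟩ := by
  classical
  set Q : Set (Fin d → ℝ) := ((fun x (j : Fin d) =>
      x j - (if (j : ℕ) < i then ((j : ℕ) : ℝ) + 1 else (s j : ℝ) - 1)) ''
        lectureHall d s) with hQdef
  have hV : ∀ r, Stmt7Aux.Vv i s r ∈ Q := fun r =>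
    ⟨Stmt7Aux.wv s r, Stmt7Aux.wv_mem s hd hpos r, rfl⟩
  have hAdual : ∀ m, Stmt7Aux.Av i s m ∈ dualPolytope Q := by
    intro m x hx
    obtain ⟨x', hx', rfl⟩ := hx
    exact Stmt7Aux.dual_ineq i s hd hi1 hid hpos hconst hinc m x' hx'
  have hpair : ∀ m r, m ≠ r → ∑ jj, Stmt7Aux.Vv i s r jj * Stmt7Aux.Av i s m jj = 1 :=
    fun m r hmr => Stmt7Aux.pair_eq i s hd hi1 hid hpos hconst hinc m r hmr
  have hlam0 : ∀ r, 0 ≤ Stmt7Aux.lamv i s r :=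
    Stmt7Aux.lam_nonneg i s hd hi1 hid hpos hconst hinc
  have hlam1 : ∑ r, Stmt7Aux.lamv i s r = 1 := Stmt7Aux.lam_sum i s
  have hbary : ∀ jj, ∑ r, Stmt7Aux.lamv i s r * Stmt7Aux.Vv i s r jj = 0 :=
    Stmt7Aux.bary i s hd hpos
  have hspan : ∀ u : Fin d → ℝ,
      (∀ r, ∑ jj, Stmt7Aux.Vv i s r jj * u jj = 0) → u = 0 := Stmt7Aux.span i s hpos
  have hrep := Stmt7Aux.rep Q (Stmt7Aux.Vv i s) (Stmt7Aux.Av i s) (Stmt7Aux.lamv i s)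
    hV hpair hlam0 hlam1 hbary hspan
  constructor
  · -- only if: dual is a lattice polytope → divisibility
    intro hdual j hj hij
    by_contra hcon
    have hsj : s j < s ⟨(j:ℕ)+1, hj⟩ := (hinc j hj hij).1
    have hks : ¬ ((s ⟨(j:ℕ)+1, hj⟩ - s j) ∣ s j) := by
      intro hdv
      apply hcon
      refine ⟨hdv, ?_⟩
      have h6 := Nat.dvd_add hdv (dvd_refl (s ⟨(j:ℕ)+1, hj⟩ - s j))
      have he : s j + (s ⟨(j:ℕ)+1, hj⟩ - s j) = s ⟨(j:ℕ)+1, hj⟩ := by omega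
      rwa [he] at h6
    have hmlt : (j:ℕ)+1 < d+1 := by omega
    have hm0 : ((⟨(j:ℕ)+1, hmlt⟩ : Fin (d+1)) : ℕ) ≠ 0 := Nat.succ_ne_zero _
    have hmd : ((⟨(j:ℕ)+1, hmlt⟩ : Fin (d+1)) : ℕ) ≠ d := by
      show (j:ℕ)+1 ≠ d
      omega
    have h1d : (j:ℕ)+1-1 < d := by omega
    have hnd : (j:ℕ)+1 < d := hj
    have hkey := Stmt7Aux.key1 (Stmt7Aux.Vv i s) (Stmt7Aux.Av i s) (Stmt7Aux.lamv i s)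
      hpair hlam1 hbary ⟨(j:ℕ)+1, hmlt⟩
    have hdiag : ∑ jj, Stmt7Aux.Vv i s ⟨(j:ℕ)+1, hmlt⟩ jj * Stmt7Aux.Av i s ⟨(j:ℕ)+1, hmlt⟩ jj
        = 1 - ((s j : ℝ) * (s ⟨(j:ℕ)+1, hj⟩ : ℝ)) / Stmt7Aux.cd i s ((j:ℕ)+1) :=
      Stmt7Aux.pair_diag i s hd hi1 hid hpos hconst hinc ⟨(j:ℕ)+1, hmlt⟩ hm0 hmd hnd h1d
    have hcd : Stmt7Aux.cd i s ((j:ℕ)+1) = (s ⟨(j:ℕ)+1, hj⟩ : ℝ) - (s j : ℝ) :=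
      Stmt7Aux.cd_ge i s hconst ((j:ℕ)+1) (by omega) hnd hij
    have hcpos : 0 < Stmt7Aux.cd i s ((j:ℕ)+1) :=
      Stmt7Aux.cd_pos i s hconst hinc ((j:ℕ)+1) (by omega) hnd
    have hkr : Stmt7Aux.cd i s ((j:ℕ)+1) = ((s ⟨(j:ℕ)+1, hj⟩ - s j : ℕ) : ℝ) := by
      rw [hcd]
      push_cast [Nat.cast_sub (le_of_lt hsj)]
      ring
    have hkposn : 0 < s ⟨(j:ℕ)+1, hj⟩ - s j := by omega
    have hkposr : (0:ℝ) < ((s ⟨(j:ℕ)+1, hj⟩ - s j : ℕ) : ℝ) := by exact_mod_cast hkposn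
    have hNpos : (0:ℝ) < (s j : ℝ) * (s ⟨(j:ℕ)+1, hj⟩ : ℝ) :=
      mul_pos (Stmt7Aux.spos s hpos j) (Stmt7Aux.spos s hpos _)
    have hphiA : (1:ℝ) - ∑ jj, Stmt7Aux.Vv i s ⟨(j:ℕ)+1, hmlt⟩ jj
          * Stmt7Aux.Av i s ⟨(j:ℕ)+1, hmlt⟩ jj
        = ((s j : ℝ) * (s ⟨(j:ℕ)+1, hj⟩ : ℝ)) / Stmt7Aux.cd i s ((j:ℕ)+1) := by
      rw [hdiag]; ring
    have hphiApos : (0:ℝ) < 1 - ∑ jj, Stmt7Aux.Vv i s ⟨(j:ℕ)+1, hmlt⟩ jj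
        * Stmt7Aux.Av i s ⟨(j:ℕ)+1, hmlt⟩ jj := by
      rw [hphiA]; exact div_pos hNpos hcpos
    have hlampos : 0 < Stmt7Aux.lamv i s ⟨(j:ℕ)+1, hmlt⟩ := by
      nlinarith [hkey, hphiApos]
    have hsubS : dualPolytope Q ∩ latticePoints d ⊆
        {y : Fin d → ℝ | ((s ⟨(j:ℕ)+1, hj⟩ - s j : ℕ) : ℝ)
          * (1 - ∑ jj, Stmt7Aux.Vv i s ⟨(j:ℕ)+1, hmlt⟩ jj * y jj)
          ≤ ((s j * s ⟨(j:ℕ)+1, hj⟩ : ℕ) : ℝ) - 1} := by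
      rintro z ⟨hzd, hzl⟩
      obtain ⟨hmu0, hmu1, hcoord⟩ := hrep z hzd
      have hmule : Stmt7Aux.lamv i s ⟨(j:ℕ)+1, hmlt⟩
          * (1 - ∑ jj, Stmt7Aux.Vv i s ⟨(j:ℕ)+1, hmlt⟩ jj * z jj) ≤ 1 := by
        calc Stmt7Aux.lamv i s ⟨(j:ℕ)+1, hmlt⟩
            * (1 - ∑ jj, Stmt7Aux.Vv i s ⟨(j:ℕ)+1, hmlt⟩ jj * z jj)
            ≤ ∑ r, Stmt7Aux.lamv i s r * (1 - ∑ jj, Stmt7Aux.Vv i s r jj * z jj) :=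
              Finset.single_le_sum (fun r _ => hmu0 r) (Finset.mem_univ _)
          _ = 1 := hmu1
      have hphiz_le : 1 - ∑ jj, Stmt7Aux.Vv i s ⟨(j:ℕ)+1, hmlt⟩ jj * z jj
          ≤ 1 - ∑ jj, Stmt7Aux.Vv i s ⟨(j:ℕ)+1, hmlt⟩ jj
            * Stmt7Aux.Av i s ⟨(j:ℕ)+1, hmlt⟩ jj := by
        have h3 : Stmt7Aux.lamv i s ⟨(j:ℕ)+1, hmlt⟩
            * (1 - ∑ jj, Stmt7Aux.Vv i s ⟨(j:ℕ)+1, hmlt⟩ jj * z jj)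
            ≤ Stmt7Aux.lamv i s ⟨(j:ℕ)+1, hmlt⟩
            * (1 - ∑ jj, Stmt7Aux.Vv i s ⟨(j:ℕ)+1, hmlt⟩ jj
                * Stmt7Aux.Av i s ⟨(j:ℕ)+1, hmlt⟩ jj) := by
          rw [hkey]; exact hmule
        exact le_of_mul_le_mul_left h3 hlampos
      have hne : (1 - ∑ jj, Stmt7Aux.Vv i s ⟨(j:ℕ)+1, hmlt⟩ jj * z jj)
          ≠ (1 - ∑ jj, Stmt7Aux.Vv i s ⟨(j:ℕ)+1, hmlt⟩ jj
              * Stmt7Aux.Av i s ⟨(j:ℕ)+1, hmlt⟩ jj) := by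
        intro heq
        have hmu_m : Stmt7Aux.lamv i s ⟨(j:ℕ)+1, hmlt⟩
            * (1 - ∑ jj, Stmt7Aux.Vv i s ⟨(j:ℕ)+1, hmlt⟩ jj * z jj) = 1 := by
          rw [heq]; exact hkey
        have hadd := Finset.add_sum_erase Finset.univ
          (fun r => Stmt7Aux.lamv i s r * (1 - ∑ jj, Stmt7Aux.Vv i s r jj * z jj))
          (Finset.mem_univ (⟨(j:ℕ)+1, hmlt⟩ : Fin (d+1)))
        rw [hmu1] at hadd
        have hrest : ∑ r ∈ Finset.univ.erase (⟨(j:ℕ)+1, hmlt⟩ : Fin (d+1)),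
            Stmt7Aux.lamv i s r * (1 - ∑ jj, Stmt7Aux.Vv i s r jj * z jj) = 0 := by
          have hmm : Stmt7Aux.lamv i s ⟨(j:ℕ)+1, hmlt⟩
              * (1 - ∑ jj, Stmt7Aux.Vv i s ⟨(j:ℕ)+1, hmlt⟩ jj * z jj)
              + ∑ r ∈ Finset.univ.erase (⟨(j:ℕ)+1, hmlt⟩ : Fin (d+1)),
                Stmt7Aux.lamv i s r * (1 - ∑ jj, Stmt7Aux.Vv i s r jj * z jj) = 1 := hadd
          linarith [hmm, hmu_m]
        have hzero : ∀ r ∈ Finset.univ.erase (⟨(j:ℕ)+1, hmlt⟩ : Fin (d+1)),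
            Stmt7Aux.lamv i s r * (1 - ∑ jj, Stmt7Aux.Vv i s r jj * z jj) = 0 :=
          (Finset.sum_eq_zero_iff_of_nonneg (fun r _ => hmu0 r)).mp hrest
        have hzc : z ⟨(j:ℕ)+1, hj⟩ = Stmt7Aux.Av i s ⟨(j:ℕ)+1, hmlt⟩ ⟨(j:ℕ)+1, hj⟩ := by
          rw [hcoord ⟨(j:ℕ)+1, hj⟩, Finset.sum_eq_single (⟨(j:ℕ)+1, hmlt⟩ : Fin (d+1))
            (fun r _ hr => by
              rw [hzero r (Finset.mem_erase.mpr ⟨hr, Finset.mem_univ r⟩), zero_mul])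
            (fun hM => absurd (Finset.mem_univ _) hM), hmu_m, one_mul]
        have hAval : Stmt7Aux.Av i s ⟨(j:ℕ)+1, hmlt⟩ ⟨(j:ℕ)+1, hj⟩
            = -((s j : ℝ) / ((s ⟨(j:ℕ)+1, hj⟩ - s j : ℕ) : ℝ)) := by
          have hsn : Stmt7Aux.sN s ((j:ℕ)+1-1) = s j :=
            Stmt7Aux.sN_val s ((j:ℕ)+1-1) (by omega)
          rw [Stmt7Aux.Av, if_neg hm0, if_neg hmd,
            if_neg (show ¬((j:ℕ)+1 = (j:ℕ)+1-1) by omega),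
            if_pos (show (j:ℕ)+1 = (j:ℕ)+1 from rfl), hsn, hkr]
        obtain ⟨q, hq⟩ := hzl ⟨(j:ℕ)+1, hj⟩
        rw [hq, hAval] at hzc
        have hkne : ((s ⟨(j:ℕ)+1, hj⟩ - s j : ℕ) : ℝ) ≠ 0 := ne_of_gt hkposr
        have h5 : (q:ℝ) * ((s ⟨(j:ℕ)+1, hj⟩ - s j : ℕ) : ℝ) = -(s j : ℝ) := by
          rw [hzc]
          field_simp
        have h7 : (s j : ℤ) = ((s ⟨(j:ℕ)+1, hj⟩ - s j : ℕ) : ℤ) * (-q) := by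
          have : (s j : ℝ) = ((s ⟨(j:ℕ)+1, hj⟩ - s j : ℕ) : ℝ) * (-(q:ℝ)) := by
            linarith [h5]
          exact_mod_cast this
        exact hks (Int.natCast_dvd_natCast.mp ⟨-q, h7⟩)
      have hphilt : 1 - ∑ jj, Stmt7Aux.Vv i s ⟨(j:ℕ)+1, hmlt⟩ jj * z jj
          < 1 - ∑ jj, Stmt7Aux.Vv i s ⟨(j:ℕ)+1, hmlt⟩ jj
            * Stmt7Aux.Av i s ⟨(j:ℕ)+1, hmlt⟩ jj := lt_of_le_of_ne hphiz_le hne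
      have hint : ∃ qz : ℤ,
          (1 - ∑ jj, Stmt7Aux.Vv i s ⟨(j:ℕ)+1, hmlt⟩ jj * z jj) = (qz:ℝ) := by
        have hterm : ∀ jj : Fin d, ∃ qq : ℤ,
            Stmt7Aux.Vv i s ⟨(j:ℕ)+1, hmlt⟩ jj * z jj = (qq:ℝ) := by
          intro jj
          obtain ⟨q1, hq1⟩ := Stmt7Aux.Vv_int i s ⟨(j:ℕ)+1, hmlt⟩ jj
          obtain ⟨q2, hq2⟩ := hzl jj
          exact ⟨q1*q2, by rw [hq1, hq2]; push_cast; ring⟩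
        choose qf hqf using hterm
        refine ⟨1 - ∑ jj, qf jj, ?_⟩
        rw [Finset.sum_congr rfl (fun jj _ => hqf jj)]
        push_cast
        ring
      obtain ⟨qz, hqz⟩ := hint
      show ((s ⟨(j:ℕ)+1, hj⟩ - s j : ℕ) : ℝ)
          * (1 - ∑ jj, Stmt7Aux.Vv i s ⟨(j:ℕ)+1, hmlt⟩ jj * z jj)
          ≤ ((s j * s ⟨(j:ℕ)+1, hj⟩ : ℕ) : ℝ) - 1
      have hlt2 : ((s ⟨(j:ℕ)+1, hj⟩ - s j : ℕ) : ℝ)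
          * (1 - ∑ jj, Stmt7Aux.Vv i s ⟨(j:ℕ)+1, hmlt⟩ jj * z jj)
          < ((s j * s ⟨(j:ℕ)+1, hj⟩ : ℕ) : ℝ) := by
        have hmul := mul_lt_mul_of_pos_left hphilt hkposr
        have hAv : ((s ⟨(j:ℕ)+1, hj⟩ - s j : ℕ) : ℝ)
            * (1 - ∑ jj, Stmt7Aux.Vv i s ⟨(j:ℕ)+1, hmlt⟩ jj
              * Stmt7Aux.Av i s ⟨(j:ℕ)+1, hmlt⟩ jj)
            = ((s j * s ⟨(j:ℕ)+1, hj⟩ : ℕ) : ℝ) := by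
          rw [hphiA, hkr, mul_div_cancel₀ _ (ne_of_gt hkposr)]
          push_cast
          ring
        rw [hAv] at hmul
        exact hmul
      have hlt3 : ((s ⟨(j:ℕ)+1, hj⟩ - s j : ℕ) : ℤ) * qz
          < ((s j * s ⟨(j:ℕ)+1, hj⟩ : ℕ) : ℤ) := by
        have : ((s ⟨(j:ℕ)+1, hj⟩ - s j : ℕ) : ℝ) * (qz:ℝ)
            < ((s j * s ⟨(j:ℕ)+1, hj⟩ : ℕ) : ℝ) := by rw [← hqz]; exact hlt2
        exact_mod_cast this
      have hle4 : ((s ⟨(j:ℕ)+1, hj⟩ - s j : ℕ) : ℤ) * qz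
          ≤ ((s j * s ⟨(j:ℕ)+1, hj⟩ : ℕ) : ℤ) - 1 := by omega
      rw [hqz]
      calc ((s ⟨(j:ℕ)+1, hj⟩ - s j : ℕ) : ℝ) * (qz:ℝ)
          = ((((s ⟨(j:ℕ)+1, hj⟩ - s j : ℕ) : ℤ) * qz : ℤ) : ℝ) := by push_cast; ring
        _ ≤ ((((s j * s ⟨(j:ℕ)+1, hj⟩ : ℕ) : ℤ) - 1 : ℤ) : ℝ) := by exact_mod_cast hle4
        _ = ((s j * s ⟨(j:ℕ)+1, hj⟩ : ℕ) : ℝ) - 1 := by push_cast; ring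
    have hconvS := Stmt7Aux.convex_halfspace_nu
      (Stmt7Aux.Vv i s ⟨(j:ℕ)+1, hmlt⟩)
      ((s ⟨(j:ℕ)+1, hj⟩ - s j : ℕ) : ℝ) (((s j * s ⟨(j:ℕ)+1, hj⟩ : ℕ) : ℝ) - 1)
    have hAm_in : Stmt7Aux.Av i s ⟨(j:ℕ)+1, hmlt⟩
        ∈ convexHull ℝ (dualPolytope Q ∩ latticePoints d) := by
      rw [← hdual]
      exact hAdual _
    have hfinal := convexHull_min hsubS hconvS hAm_in
    have hfinal' : ((s ⟨(j:ℕ)+1, hj⟩ - s j : ℕ) : ℝ)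
        * (1 - ∑ jj, Stmt7Aux.Vv i s ⟨(j:ℕ)+1, hmlt⟩ jj
          * Stmt7Aux.Av i s ⟨(j:ℕ)+1, hmlt⟩ jj)
        ≤ ((s j * s ⟨(j:ℕ)+1, hj⟩ : ℕ) : ℝ) - 1 := hfinal
    have hAv : ((s ⟨(j:ℕ)+1, hj⟩ - s j : ℕ) : ℝ)
        * (1 - ∑ jj, Stmt7Aux.Vv i s ⟨(j:ℕ)+1, hmlt⟩ jj
          * Stmt7Aux.Av i s ⟨(j:ℕ)+1, hmlt⟩ jj)
        = ((s j * s ⟨(j:ℕ)+1, hj⟩ : ℕ) : ℝ) := by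
      rw [hphiA, hkr, mul_div_cancel₀ _ (ne_of_gt hkposr)]
      push_cast
      ring
    rw [hAv] at hfinal'
    linarith
  · -- if: divisibility → dual is a lattice polytope
    intro hdvd
    apply Set.Subset.antisymm
    · intro y hy
      obtain ⟨hmu0, hmu1, hcoord⟩ := hrep y hy
      have hy' : y = Finset.univ.centerMass
          (fun r => Stmt7Aux.lamv i s r * (1 - ∑ jj, Stmt7Aux.Vv i s r jj * y jj))
          (Stmt7Aux.Av i s) := by
        funext jj
        rw [Finset.centerMass, hmu1, inv_one, one_smul, Finset.sum_apply]
        simp only [Pi.smul_apply, smul_eq_mul]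
        exact hcoord jj
      rw [hy']
      refine Finset.centerMass_mem_convexHull _ (fun r _ => hmu0 r)
        (by rw [hmu1]; norm_num) (fun r _ => ⟨hAdual r, fun jj => ?_⟩)
      exact Stmt7Aux.Av_int i s hd hi1 hid hpos hconst hinc hdvd r jj
    · exact convexHull_min Set.inter_subset_left (Stmt7Aux.convex_dualPolytope Q)
end
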